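/- arXiv:cs/0110025 — 2 statements merged into one kernel-verified Lean document; each statement's English description precedes it below -/
import Mathlib

section
/- Let G be a finite simple graph with maximum degree Δ = max-deg(G), and let H be the MDG-gadget graph of G. Then min-mdg(H) = mvc(H), i.e., the maximum-degree greedy heuristic can output a minimum vertex cover of H; in fact min-mdg(H) = mvc(G) + |E(G)|·(Δ + 1). -/
open scoped Classical

noncomputable section

/-- `C` is a vertex cover of `G`: every edge has an endpoint in `C`. -/
def IsVC {V : Type*} (G : SimpleGraph V) (C : Finset V) : Prop :=
  ∀ ⦃u w : V⦄, G.Adj u w → u ∈ C ∨ w ∈ C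

/-- `mvc G` is the minimum size of a vertex cover of `G`. -/
def mvc {V : Type*} [Fintype V] (G : SimpleGraph V) : ℕ :=
  sInf {n | ∃ C : Finset V, IsVC G C ∧ C.card = n}

/-- `M` is a matching of `G` (a set of pairwise disjoint edges of `G`). -/
def IsMatchingSet {V : Type*} (G : SimpleGraph V) (M : Finset (Sym2 V)) : Prop :=
  (∀ e ∈ M, e ∈ G.edgeSet) ∧
    ∀ e ∈ M, ∀ f ∈ M, e ≠ f → ∀ v, v ∈ e → v ∉ f

/-- `M` is a maximal matching of `G`: no edge of `G` can be added to it. -/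
def IsMaximalMatchingSet {V : Type*} (G : SimpleGraph V) (M : Finset (Sym2 V)) : Prop :=
  IsMatchingSet G M ∧ ∀ e ∈ G.edgeSet, e ∉ M → ¬ IsMatchingSet G (insert e M)

/-- `minEd G` is the minimum of `2·|M|` over all maximal matchings `M` of `G`
(the minimum size of a vertex cover producible by the edge deletion heuristic). -/
def minEd {V : Type*} [Fintype V] (G : SimpleGraph V) : ℕ :=
  sInf {n | ∃ M : Finset (Sym2 V), IsMaximalMatchingSet G M ∧ n = 2 * M.card}

/-- Degree of `v` inside the induced subgraph on the vertex set `S`. -/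
def degIn {V : Type*} (G : SimpleGraph V) (S : Finset V) (v : V) : ℕ :=
  (S.filter fun w => G.Adj v w).card

/-- An MDG run: a sequence of vertices, each of maximum degree in the currently
remaining induced subgraph, whose removal leaves no edges. -/
def IsMDGRun {V : Type*} (G : SimpleGraph V) : List V → Finset V → Prop
  | [], S => ∀ u ∈ S, ∀ w ∈ S, ¬ G.Adj u w
  | v :: L, S => v ∈ S ∧ (∀ u ∈ S, degIn G S u ≤ degIn G S v) ∧ IsMDGRun G L (S.erase v)

/-- `minMdg G`: minimum length of an MDG run on `G` (minimum size of a vertex cover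
producible by the maximum-degree greedy heuristic). -/
def minMdg {V : Type*} [Fintype V] (G : SimpleGraph V) : ℕ :=
  sInf {k | ∃ L : List V, L.length = k ∧ IsMDGRun G L Finset.univ}

/-- The edge relation of the 4-vertex ED gadget: edges {v₁,v₂}, {v₃,v₄}, {v₁,v₃}
(on indices 0,1,2,3). -/
def gadgetRel (i j : Fin 4) : Prop :=
  s(i, j) = s(0, 1) ∨ s(i, j) = s(2, 3) ∨ s(i, j) = s(0, 2)

lemma gadgetRel_symm {i j : Fin 4} (h : gadgetRel i j) : gadgetRel j i := by
  unfold gadgetRel at h ⊢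
  rwa [Sym2.eq_swap]

lemma gadgetRel_irrefl (i : Fin 4) : ¬ gadgetRel i i := by
  rintro (h | h | h) <;>
    (rw [Sym2.eq_iff] at h; rcases h with ⟨h1, h2⟩ | ⟨h1, h2⟩ <;> simp_all)

/-- The ED-gadget graph of `G`: four copies `v₁,…,v₄` of each vertex, gadget edges
inside each copy, and all 16 edges `{aᵢ,bⱼ}` for each edge `{a,b}` of `G`. -/
def edGadget {V : Type*} (G : SimpleGraph V) : SimpleGraph (V × Fin 4) where
  Adj x y := (x.1 = y.1 ∧ gadgetRel x.2 y.2) ∨ G.Adj x.1 y.1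
  symm := by
    constructor
    rintro ⟨a, i⟩ ⟨b, j⟩ (⟨h1, h2⟩ | h)
    · exact Or.inl ⟨h1.symm, gadgetRel_symm h2⟩
    · exact Or.inr h.symm
  loopless := by
    constructor
    rintro ⟨a, i⟩ (⟨-, h2⟩ | h)
    · exact gadgetRel_irrefl i h2
    · exact G.loopless.irrefl a h

/-- The join of two vertex-disjoint graphs. -/
def graphJoin {α β : Type*} (G : SimpleGraph α) (H : SimpleGraph β) :
    SimpleGraph (α ⊕ β) where
  Adj x y :=
    match x, y with
    | .inl a, .inl b => G.Adj a b
    | .inr a, .inr b => H.Adj a b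
    | _, _ => True
  symm := by
    constructor
    rintro (a | a) (b | b) h
    · exact G.adj_symm h
    · exact trivial
    · exact trivial
    · exact H.adj_symm h
  loopless := by
    constructor
    rintro (a | a) h
    · exact G.loopless.irrefl a h
    · exact H.loopless.irrefl a h

/-- The disjoint union of two vertex-disjoint graphs. -/
def graphUnion {α β : Type*} (G : SimpleGraph α) (H : SimpleGraph β) :
    SimpleGraph (α ⊕ β) where
  Adj x y :=
    match x, y with
    | .inl a, .inl b => G.Adj a b
    | .inr a, .inr b => H.Adj a b
    | _, _ => False
  symm := by
    constructor
    rintro (a | a) (b | b) h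
    · exact G.adj_symm h
    · exact h.elim
    · exact h.elim
    · exact H.adj_symm h
  loopless := by
    constructor
    rintro (a | a) h
    · exact G.loopless.irrefl a h
    · exact H.loopless.irrefl a h

/-- Adjacency of the MDG-gadget graph: the gadget vertex `uᵢᵉ` for `e = {u,v}` is
encoded as `Sum.inr (⟨(u,v), _⟩, i)`.  Edges: `{uᵢᵉ, vⱼᵉ}` for all `i, j`, plus
`{u, u₁ᵉ}` and `{v, v₁ᵉ}`. -/
def mdgAdj {V : Type*} (G : SimpleGraph V) (Δ : ℕ) :
    (V ⊕ ({p : V × V // G.Adj p.1 p.2} × Fin (Δ + 1))) →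
      (V ⊕ ({p : V × V // G.Adj p.1 p.2} × Fin (Δ + 1))) → Prop
  | .inl _, .inl _ => False
  | .inl u, .inr (⟨(a, _), _⟩, i) => u = a ∧ i = 0
  | .inr (⟨(a, _), _⟩, i), .inl u => u = a ∧ i = 0
  | .inr (⟨(a, b), _⟩, _), .inr (⟨(c, d), _⟩, _) => a = d ∧ b = c

/-- The MDG-gadget graph of `G` with parameter `Δ`. -/
def mdgGadget {V : Type*} (G : SimpleGraph V) (Δ : ℕ) :
    SimpleGraph (V ⊕ ({p : V × V // G.Adj p.1 p.2} × Fin (Δ + 1))) where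
  Adj := mdgAdj G Δ
  symm := by
    constructor
    rintro (u | ⟨⟨⟨a, b⟩, hab⟩, i⟩) (v | ⟨⟨⟨c, d⟩, hcd⟩, j⟩) h
    · exact h.elim
    · exact h
    · exact h
    · exact ⟨h.2.symm, h.1.symm⟩
  loopless := by
    constructor
    rintro (u | ⟨⟨⟨a, b⟩, hab⟩, i⟩) h
    · exact h.elim
    · exact G.ne_of_adj hab h.1

section Generic
variable {W : Type*} (H : SimpleGraph W)

lemma degIn_le_of {S : Finset W} {v : W} (A : Finset W)
    (h : ∀ y ∈ S, H.Adj v y → y ∈ A) : degIn H S v ≤ A.card := by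
  apply Finset.card_le_card
  intro y hy
  rw [Finset.mem_filter] at hy
  exact h y hy.1 hy.2

lemma le_degIn_of {S : Finset W} {v : W} (A : Finset W)
    (hA : A ⊆ S) (h : ∀ y ∈ A, H.Adj v y) : A.card ≤ degIn H S v := by
  apply Finset.card_le_card
  intro y hy
  rw [Finset.mem_filter]
  exact ⟨hA hy, h y hy⟩

lemma runA : ∀ (n : ℕ) (T S R : Finset W), T.card = n → T ⊆ S →
    (∀ x ∈ R, x ∈ S ∧ x ∉ T) → (∀ x ∈ S, x ∉ T → x ∈ R) →
    (∀ v ∈ T, ∀ S' : Finset W, R ⊆ S' → S' ⊆ S → v ∈ S' →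
      ∀ u ∈ S', degIn H S' u ≤ degIn H S' v) →
    ∀ (L : List W), IsMDGRun H L R →
    ∃ L', L'.length = T.card ∧ IsMDGRun H (L' ++ L) S := by
  intro n
  induction n with
  | zero =>
    intro T S R hcard hTS hR1 hR2 hmax L hL
    refine ⟨[], by simp [hcard], ?_⟩
    rw [Finset.card_eq_zero] at hcard
    subst hcard
    have hRS : R = S := Finset.ext fun x =>
      ⟨fun hx => (hR1 x hx).1, fun hx => hR2 x hx (Finset.notMem_empty x)⟩
    subst hRS
    simpa using hL
  | succ n ih =>
    intro T S R hcard hTS hR1 hR2 hmax L hL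
    have hne : T.Nonempty := Finset.card_pos.mp (by omega)
    obtain ⟨v, hv⟩ := hne
    have hvS : v ∈ S := hTS hv
    obtain ⟨L', hlen, hrun⟩ := ih (T.erase v) (S.erase v) R
      (by rw [Finset.card_erase_of_mem hv, hcard]; omega)
      (fun x hx => Finset.mem_erase.mpr ⟨(Finset.mem_erase.mp hx).1, hTS (Finset.mem_erase.mp hx).2⟩)
      (by
        intro x hx
        obtain ⟨hxS, hxT⟩ := hR1 x hx
        exact ⟨Finset.mem_erase.mpr ⟨fun h => hxT (h ▸ hv), hxS⟩,
          fun h => hxT (Finset.mem_of_mem_erase h)⟩)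
      (by
        intro x hx hxT
        have hxv : x ≠ v := (Finset.mem_erase.mp hx).1
        exact hR2 x (Finset.mem_of_mem_erase hx)
          (fun h => hxT (Finset.mem_erase.mpr ⟨hxv, h⟩)))
      (by
        intro v' hv' S' hS'1 hS'2 hv'S' u hu
        exact hmax v' (Finset.mem_erase.mp hv').2 S' hS'1
          (hS'2.trans (Finset.erase_subset _ _)) hv'S' u hu)
      L hL
    refine ⟨v :: L', by simp [hlen, Finset.card_erase_of_mem hv, hcard], ?_⟩
    refine ⟨hvS, hmax v hv S (fun x hx => (hR1 x hx).1) (le_refl S) hvS, hrun⟩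

lemma runB : ∀ (n : ℕ) (T S : Finset W), T.card = n → T ⊆ S →
    (∀ t ∈ T, ∀ x ∈ S, H.Adj t x → x ∉ T ∧ ∀ t' ∈ T, t' ≠ t → ¬ H.Adj t' x) →
    (∀ u ∈ S, ∀ w ∈ S, H.Adj u w → u ∈ T ∨ w ∈ T) →
    (∀ t ∈ T, 1 ≤ degIn H S t) →
    ∃ L : List W, L.length = T.card ∧ IsMDGRun H L S := by
  intro n
  induction n with
  | zero =>
    intro T S hcard hTS hdisj hcov hdeg
    rw [Finset.card_eq_zero] at hcard
    subst hcard
    refine ⟨[], rfl, ?_⟩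
    intro u hu w hw hadj
    rcases hcov u hu w hw hadj with h | h <;> simp at h
  | succ n ih =>
    intro T S hcard hTS hdisj hcov hdeg
    have hne : T.Nonempty := Finset.card_pos.mp (by omega)
    obtain ⟨t, htT, htmax⟩ := T.exists_max_image (degIn H S) hne
    have htS : t ∈ S := hTS htT
    -- t has max degree in S
    have hmax : ∀ u ∈ S, degIn H S u ≤ degIn H S t := by
      intro u hu
      by_cases huT : u ∈ T
      · exact htmax u huT
      · -- u has at most one neighbor in S
        have h1 : degIn H S u ≤ 1 := by
          rw [degIn, Finset.card_le_one]
          intro a ha b hb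
          rw [Finset.mem_filter] at ha hb
          have haT : a ∈ T := (hcov u hu a ha.1 ha.2).resolve_left huT
          have hbT : b ∈ T := (hcov u hu b hb.1 hb.2).resolve_left huT
          by_contra hab
          exact (hdisj a haT u hu ha.2.symm).2 b hbT (Ne.symm hab) hb.2.symm
        exact h1.trans (hdeg t htT)
    obtain ⟨L, hlen, hrun⟩ := ih (T.erase t) (S.erase t)
      (by rw [Finset.card_erase_of_mem htT, hcard]; omega)
      (fun x hx => Finset.mem_erase.mpr ⟨(Finset.mem_erase.mp hx).1, hTS (Finset.mem_erase.mp hx).2⟩)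
      (by
        intro t' ht' x hx hadj
        obtain ⟨h1, h2⟩ := hdisj t' (Finset.mem_erase.mp ht').2 x (Finset.mem_of_mem_erase hx) hadj
        exact ⟨fun hc => h1 (Finset.mem_of_mem_erase hc),
          fun t'' ht'' hne' => h2 t'' (Finset.mem_of_mem_erase ht'') hne'⟩)
      (by
        intro u hu w hw hadj
        rcases hcov u (Finset.mem_of_mem_erase hu) w (Finset.mem_of_mem_erase hw) hadj with h | h
        · exact Or.inl (Finset.mem_erase.mpr ⟨(Finset.mem_erase.mp hu).1, h⟩)
        · exact Or.inr (Finset.mem_erase.mpr ⟨(Finset.mem_erase.mp hw).1, h⟩))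
      (by
        intro t' ht'
        have hne2 : ¬ H.Adj t' t := by
          intro hadj
          exact ((hdisj t' (Finset.mem_erase.mp ht').2 t htS hadj).1) htT
        have : degIn H (S.erase t) t' = degIn H S t' := by
          unfold degIn
          congr 1
          ext x
          simp only [Finset.mem_filter, Finset.mem_erase]
          constructor
          · rintro ⟨⟨_, hx⟩, h⟩; exact ⟨hx, h⟩
          · rintro ⟨hx, h⟩
            refine ⟨⟨?_, hx⟩, h⟩
            rintro rfl; exact hne2 h
        rw [this]
        exact hdeg t' (Finset.mem_erase.mp ht').2)
    refine ⟨t :: L, by simp [hlen, Finset.card_erase_of_mem htT, hcard], ?_⟩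
    exact ⟨htS, hmax, hrun⟩

lemma run_cover : ∀ (L : List W) (S : Finset W), IsMDGRun H L S →
    ∀ u ∈ S, ∀ w ∈ S, H.Adj u w → u ∈ L ∨ w ∈ L := by
  intro L
  induction L with
  | nil => intro S h u hu w hw hadj; exact absurd hadj (h u hu w hw)
  | cons v L ih =>
    intro S h u hu w hw hadj
    obtain ⟨hv, _, h'⟩ := h
    by_cases huv : u = v
    · exact Or.inl (huv ▸ (List.mem_cons_self (a := v) (l := L)))
    by_cases hwv : w = v
    · exact Or.inr (hwv ▸ (List.mem_cons_self (a := v) (l := L)))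
    rcases ih (S.erase v) h' u (Finset.mem_erase.mpr ⟨huv, hu⟩) w (Finset.mem_erase.mpr ⟨hwv, hw⟩) hadj with h | h
    · exact Or.inl (List.mem_cons_of_mem v h)
    · exact Or.inr (List.mem_cons_of_mem v h)

lemma mvc_le_minMdg [Fintype W] (hne : {k | ∃ L : List W, L.length = k ∧ IsMDGRun H L Finset.univ}.Nonempty) :
    mvc H ≤ minMdg H := by
  obtain ⟨L, hlen, hrun⟩ := Nat.sInf_mem hne
  have hvc : IsVC H L.toFinset := by
    intro u w hadj
    rcases run_cover H L Finset.univ hrun u (Finset.mem_univ u) w (Finset.mem_univ w) hadj with h | h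
    · exact Or.inl (List.mem_toFinset.mpr h)
    · exact Or.inr (List.mem_toFinset.mpr h)
  calc mvc H ≤ L.toFinset.card := Nat.sInf_le ⟨L.toFinset, hvc, rfl⟩
    _ ≤ L.length := L.toFinset_card_le
    _ = minMdg H := hlen

end Generic


section Gadget
variable {V : Type*} (G : SimpleGraph V) (Δ : ℕ)

abbrev EE := {p : V × V // G.Adj p.1 p.2}

def swapE (e : EE G) : EE G := ⟨(e.1.2, e.1.1), e.2.symm⟩

variable {G}

lemma swapE_swapE (e : EE G) : swapE G (swapE G e) = e := rfl

lemma swapE_ne (e : EE G) : swapE G e ≠ e := by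
  intro h
  have := congrArg (fun x => x.1.1) h
  exact G.ne_of_adj e.2 (by simpa [swapE] using this.symm)

lemma adj_ll (u w : V) : ¬ (mdgGadget G Δ).Adj (.inl u) (.inl w) := fun h => h

lemma adj_lr (u : V) (e : EE G) (i : Fin (Δ + 1)) :
    (mdgGadget G Δ).Adj (.inl u) (.inr (e, i)) ↔ u = e.1.1 ∧ i = 0 := by
  obtain ⟨⟨a, b⟩, h⟩ := e
  exact Iff.rfl

lemma adj_rl (u : V) (e : EE G) (i : Fin (Δ + 1)) :
    (mdgGadget G Δ).Adj (.inr (e, i)) (.inl u) ↔ u = e.1.1 ∧ i = 0 := by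
  obtain ⟨⟨a, b⟩, h⟩ := e
  exact Iff.rfl

lemma adj_rr (e f : EE G) (i j : Fin (Δ + 1)) :
    (mdgGadget G Δ).Adj (.inr (e, i)) (.inr (f, j)) ↔ f = swapE G e := by
  obtain ⟨⟨a, b⟩, h⟩ := e
  obtain ⟨⟨c, d⟩, h'⟩ := f
  show a = d ∧ b = c ↔ _
  rw [Subtype.ext_iff, Prod.ext_iff]
  show _ ↔ c = b ∧ d = a
  constructor
  · rintro ⟨rfl, rfl⟩; exact ⟨rfl, rfl⟩
  · rintro ⟨rfl, rfl⟩; exact ⟨rfl, rfl⟩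



def keepc (c : Sym2 V → V) (e : EE G) : Prop := c (Sym2.mk e.1.1 e.1.2) = e.1.1

lemma mk_swapE (e : EE G) : Sym2.mk (swapE G e).1.1 (swapE G e).1.2 = Sym2.mk e.1.1 e.1.2 := by
  obtain ⟨⟨a, b⟩, h⟩ := e
  exact Sym2.eq_swap

lemma keep_or {c : Sym2 V → V}
    (hc : ∀ e : EE G, c (Sym2.mk e.1.1 e.1.2) = e.1.1 ∨ c (Sym2.mk e.1.1 e.1.2) = e.1.2)
    (e : EE G) : keepc c e ∨ keepc c (swapE G e) := by
  rcases hc e with h | h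
  · exact Or.inl h
  · right
    unfold keepc
    rw [mk_swapE]
    exact h

lemma keep_nand {c : Sym2 V → V} (e : EE G)
    (h1 : keepc c e) (h2 : keepc c (swapE G e)) : False := by
  unfold keepc at h1 h2
  rw [mk_swapE] at h2
  exact G.ne_of_adj e.2 (h1.symm.trans h2)

lemma card_orient [Fintype V] (q : EE G → Prop)
    (hq1 : ∀ e : EE G, q e ∨ q (swapE G e))
    (hq2 : ∀ e : EE G, q e → ¬ q (swapE G e)) :
    (Finset.univ.filter q).card = G.edgeFinset.card := by
  apply Finset.card_bij (fun (e : EE G) _ => Sym2.mk e.1.1 e.1.2)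
  · intro e he
    obtain ⟨⟨a, b⟩, h⟩ := e
    simpa [SimpleGraph.mem_edgeFinset] using h
  · intro e he f hf hef
    rw [Finset.mem_filter] at he hf
    rcases Sym2.mk_eq_mk_iff.mp hef with h | h
    · exact Subtype.ext h
    · exfalso
      have : f = swapE G e := by
        apply Subtype.ext
        obtain ⟨⟨a, b⟩, _⟩ := e
        obtain ⟨⟨x, y⟩, _⟩ := f
        simp only [Prod.swap] at h
        obtain ⟨h1, h2⟩ := Prod.mk.injEq .. ▸ h
        simp [swapE, h1, h2]
      exact hq2 e he.2 (this ▸ hf.2)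
  · intro m hm
    rw [SimpleGraph.mem_edgeFinset] at hm
    induction m with
    | _ a b =>
      have hab : G.Adj a b := hm
      rcases hq1 ⟨(a, b), hab⟩ with h | h
      · exact ⟨⟨(a, b), hab⟩, Finset.mem_filter.mpr ⟨Finset.mem_univ _, h⟩, rfl⟩
      · exact ⟨swapE G ⟨(a, b), hab⟩, Finset.mem_filter.mpr ⟨Finset.mem_univ _, h⟩,
          (mk_swapE _).trans rfl⟩

def sideAll (e : EE G) : Finset (V ⊕ (EE G × Fin (Δ + 1))) :=
  Finset.univ.image fun j : Fin (Δ + 1) => Sum.inr (e, j)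

def sideTail (e : EE G) : Finset (V ⊕ (EE G × Fin (Δ + 1))) :=
  (Finset.univ.erase (0 : Fin (Δ + 1))).image fun j => Sum.inr (e, j)

lemma inr_injective (e : EE G) :
    Function.Injective (fun j : Fin (Δ + 1) => (Sum.inr (e, j) : V ⊕ (EE G × Fin (Δ + 1)))) := by
  intro i j h
  simpa using h

lemma card_sideAll (e : EE G) : (sideAll Δ e).card = Δ + 1 := by
  rw [sideAll, Finset.card_image_of_injective _ (inr_injective Δ e)]
  simp

lemma card_sideTail (e : EE G) : (sideTail Δ e).card = Δ := by
  rw [sideTail, Finset.card_image_of_injective _ (inr_injective Δ e)]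
  simp

lemma mem_sideAll {e f : EE G} {j : Fin (Δ + 1)} :
    (Sum.inr (f, j) : V ⊕ (EE G × Fin (Δ + 1))) ∈ sideAll Δ e ↔ f = e := by
  simp only [sideAll, Finset.mem_image, Finset.mem_univ, true_and]
  constructor
  · rintro ⟨k, heq⟩
    exact (Prod.mk.injEq .. ▸ (Sum.inr.injEq .. ▸ heq.symm)).1
  · rintro rfl
    exact ⟨j, rfl⟩

lemma mem_sideTail {e f : EE G} {j : Fin (Δ + 1)} :
    (Sum.inr (f, j) : V ⊕ (EE G × Fin (Δ + 1))) ∈ sideTail Δ e ↔ f = e ∧ j ≠ 0 := by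
  simp only [sideTail, Finset.mem_image, Finset.mem_erase, Finset.mem_univ, and_true]
  constructor
  · rintro ⟨k, hk, heq⟩
    have h1 : e = f ∧ k = j := by simpa using heq
    exact ⟨h1.1.symm, h1.2 ▸ hk⟩
  · rintro ⟨rfl, hj⟩
    exact ⟨j, hj, rfl⟩

lemma inl_not_mem_sideAll (u : V) (e : EE G) :
    (Sum.inl u : V ⊕ (EE G × Fin (Δ + 1))) ∉ sideAll Δ e := by
  simp [sideAll]

lemma inl_not_mem_sideTail (u : V) (e : EE G) :
    (Sum.inl u : V ⊕ (EE G × Fin (Δ + 1))) ∉ sideTail Δ e := by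
  simp [sideTail]

lemma degIn_inl_le [Fintype V] (S : Finset (V ⊕ (EE G × Fin (Δ + 1)))) (w : V) :
    degIn (mdgGadget G Δ) S (.inl w) ≤ G.degree w := by
  classical
  calc degIn (mdgGadget G Δ) S (.inl w)
      ≤ ((Finset.univ.filter fun e : EE G => e.1.1 = w).image
          fun e => (Sum.inr (e, (0 : Fin (Δ + 1))) : V ⊕ (EE G × Fin (Δ + 1)))).card := by
        apply degIn_le_of
        rintro (u | ⟨e, i⟩) hy hadj
        · exact absurd hadj (adj_ll Δ w u)
        · obtain ⟨h1, h2⟩ := (adj_lr Δ w e i).mp hadj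
          subst h2
          exact Finset.mem_image.mpr ⟨e, Finset.mem_filter.mpr ⟨Finset.mem_univ _, h1.symm⟩, rfl⟩
    _ = (Finset.univ.filter fun e : EE G => e.1.1 = w).card := by
        apply Finset.card_image_of_injective
        intro e f h
        simpa using h
    _ ≤ (G.neighborFinset w).card := by
        apply Finset.card_le_card_of_injOn (fun e => e.1.2)
        · intro e he
          rw [Finset.mem_coe, Finset.mem_filter] at he
          rw [Finset.mem_coe, SimpleGraph.mem_neighborFinset]
          exact he.2 ▸ e.2
        · intro e he f hf h
          rw [Finset.mem_coe, Finset.mem_filter] at he hf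
          apply Subtype.ext
          apply Prod.ext
          · rw [he.2, hf.2]
          · exact h
    _ = G.degree w := (G.card_neighborFinset_eq_degree w).symm

lemma degIn_inr_le_all (S : Finset (V ⊕ (EE G × Fin (Δ + 1)))) (f : EE G) (i : Fin (Δ + 1)) :
    degIn (mdgGadget G Δ) S (.inr (f, i)) ≤ Δ + 2 := by
  calc degIn (mdgGadget G Δ) S (.inr (f, i))
      ≤ (sideAll Δ (swapE G f) ∪ {Sum.inl f.1.1}).card := by
        apply degIn_le_of
        rintro (u | ⟨g, k⟩) hy hadj
        · obtain ⟨rfl, -⟩ := (adj_rl Δ u f i).mp hadj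
          exact Finset.mem_union_right _ (Finset.mem_singleton_self _)
        · obtain rfl := (adj_rr Δ f g i k).mp hadj
          exact Finset.mem_union_left _ ((mem_sideAll Δ).mpr rfl)
    _ ≤ (sideAll Δ (swapE G f)).card + 1 := (Finset.card_union_le _ _).trans (by simp)
    _ = Δ + 2 := by rw [card_sideAll]

lemma degIn_inr_le_tail (S : Finset (V ⊕ (EE G × Fin (Δ + 1)))) (f : EE G) (i : Fin (Δ + 1))
    (hi : i ≠ 0) : degIn (mdgGadget G Δ) S (.inr (f, i)) ≤ Δ + 1 := by
  calc degIn (mdgGadget G Δ) S (.inr (f, i))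
      ≤ (sideAll Δ (swapE G f)).card := by
        apply degIn_le_of
        rintro (u | ⟨g, k⟩) hy hadj
        · obtain ⟨-, h0⟩ := (adj_rl Δ u f i).mp hadj
          exact absurd h0 hi
        · obtain rfl := (adj_rr Δ f g i k).mp hadj
          exact (mem_sideAll Δ).mpr rfl
    _ = Δ + 1 := card_sideAll Δ _

lemma degIn_inr_le_head (S : Finset (V ⊕ (EE G × Fin (Δ + 1)))) (f : EE G) (i : Fin (Δ + 1))
    (h0 : (Sum.inr (swapE G f, 0) : V ⊕ (EE G × Fin (Δ + 1))) ∉ S) :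
    degIn (mdgGadget G Δ) S (.inr (f, i)) ≤ Δ + 1 := by
  calc degIn (mdgGadget G Δ) S (.inr (f, i))
      ≤ (sideTail Δ (swapE G f) ∪ {Sum.inl f.1.1}).card := by
        apply degIn_le_of
        rintro (u | ⟨g, k⟩) hy hadj
        · obtain ⟨rfl, -⟩ := (adj_rl Δ u f i).mp hadj
          exact Finset.mem_union_right _ (Finset.mem_singleton_self _)
        · obtain rfl := (adj_rr Δ f g i k).mp hadj
          refine Finset.mem_union_left _ ((mem_sideTail Δ).mpr ⟨rfl, ?_⟩)
          rintro rfl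
          exact h0 hy
    _ ≤ (sideTail Δ (swapE G f)).card + 1 := (Finset.card_union_le _ _).trans (by simp)
    _ = Δ + 1 := by rw [card_sideTail]

lemma exists_run [Fintype V] (hΔ : ∀ v : V, G.degree v ≤ Δ)
    (C : Finset V) (hC : IsVC G C) (hmin : ∀ c ∈ C, ∃ w, G.Adj c w ∧ w ∉ C) :
    ∃ L : List (V ⊕ (EE G × Fin (Δ + 1))),
      L.length = C.card + G.edgeFinset.card * (Δ + 1) ∧
      IsMDGRun (mdgGadget G Δ) L Finset.univ := by
  classical
  set H := mdgGadget G Δ with hHdef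
  have hex : ∀ e : EE G, ∃ v, v ∈ Sym2.mk e.1.1 e.1.2 ∧ v ∈ C := by
    rintro ⟨⟨a, b⟩, hab⟩
    rcases hC hab with h | h
    · exact ⟨a, by simp, h⟩
    · exact ⟨b, by simp, h⟩
  set cov : Sym2 V → V := fun m =>
    if h : ∃ v, v ∈ m ∧ v ∈ C then h.choose else m.out.1 with hcovdef
  have hcov1 : ∀ e : EE G, cov (Sym2.mk e.1.1 e.1.2) ∈ Sym2.mk e.1.1 e.1.2 ∧ cov (Sym2.mk e.1.1 e.1.2) ∈ C := by
    intro e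
    rw [hcovdef]
    simp only [dif_pos (hex e)]
    exact (hex e).choose_spec
  have hcov_or : ∀ e : EE G, cov (Sym2.mk e.1.1 e.1.2) = e.1.1 ∨ cov (Sym2.mk e.1.1 e.1.2) = e.1.2 := by
    intro e
    have := (hcov1 e).1
    obtain ⟨⟨a, b⟩, hab⟩ := e
    simpa [Sym2.mem_iff] using this
  set k : EE G → Prop := keepc cov with hkdef
  have k_or : ∀ e : EE G, k e ∨ k (swapE G e) := keep_or hcov_or
  have k_nand : ∀ e : EE G, k e → ¬ k (swapE G e) := fun e h1 h2 => keep_nand e h1 h2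
  have hkC : ∀ e : EE G, k e → e.1.1 ∈ C := by
    intro e hk
    have := (hcov1 e).2
    rwa [hk] at this
  have hforce : ∀ c ∈ C, ∃ e : EE G, k e ∧ e.1.1 = c := by
    intro c hc
    obtain ⟨w, hcw, hwC⟩ := hmin c hc
    refine ⟨⟨(c, w), hcw⟩, ?_, rfl⟩
    have h1 := hcov1 ⟨(c, w), hcw⟩
    have h2 : cov (Sym2.mk c w) = c ∨ cov (Sym2.mk c w) = w := by
      simpa [Sym2.mem_iff] using h1.1
    rcases h2 with h | h
    · exact h
    · exact absurd (h ▸ h1.2) hwC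
  have notk_or : ∀ e : EE G, ¬ k e ∨ ¬ k (swapE G e) := by
    intro e
    by_cases h : k e
    · exact Or.inr (k_nand e h)
    · exact Or.inl h
  have notk_nand : ∀ e : EE G, ¬ k e → ¬ ¬ k (swapE G e) := by
    intro e h hh
    rcases k_or e with h' | h'
    · exact h h'
    · exact hh h'
  set T1 : Finset (V ⊕ (EE G × Fin (Δ + 1))) :=
    (Finset.univ.filter fun e : EE G => ¬ k e).image
      (fun e => Sum.inr (e, (0 : Fin (Δ + 1)))) with hT1def
  set T2 : Finset (V ⊕ (EE G × Fin (Δ + 1))) :=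
    ((Finset.univ.filter fun e : EE G => ¬ k e) ×ˢ (Finset.univ.erase (0 : Fin (Δ + 1)))).image
      (fun p => Sum.inr (p.1, p.2)) with hT2def
  set S1 : Finset (V ⊕ (EE G × Fin (Δ + 1))) := Finset.univ \ T1 with hS1def
  set S2 : Finset (V ⊕ (EE G × Fin (Δ + 1))) := S1 \ T2 with hS2def
  set T3 : Finset (V ⊕ (EE G × Fin (Δ + 1))) := C.image Sum.inl with hT3def
  -- membership characterizations
  have hT1r : ∀ (e : EE G) (i : Fin (Δ + 1)),
      (Sum.inr (e, i) : V ⊕ (EE G × Fin (Δ + 1))) ∈ T1 ↔ ¬ k e ∧ i = 0 := by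
    intro e i
    rw [hT1def]
    constructor
    · intro h
      obtain ⟨f, hf, heq⟩ := Finset.mem_image.mp h
      obtain ⟨rfl, rfl⟩ : f = e ∧ (0 : Fin (Δ + 1)) = i := by
        simpa [Prod.ext_iff] using heq
      exact ⟨(Finset.mem_filter.mp hf).2, rfl⟩
    · rintro ⟨hk, rfl⟩
      exact Finset.mem_image.mpr ⟨e, Finset.mem_filter.mpr ⟨Finset.mem_univ _, hk⟩, rfl⟩
  have hT2r : ∀ (e : EE G) (i : Fin (Δ + 1)),
      (Sum.inr (e, i) : V ⊕ (EE G × Fin (Δ + 1))) ∈ T2 ↔ ¬ k e ∧ i ≠ 0 := by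
    intro e i
    rw [hT2def]
    constructor
    · intro h
      obtain ⟨⟨f, j⟩, hf, heq⟩ := Finset.mem_image.mp h
      obtain ⟨rfl, rfl⟩ : f = e ∧ j = i := by simpa [Prod.ext_iff] using heq
      have := Finset.mem_product.mp hf
      exact ⟨(Finset.mem_filter.mp this.1).2, (Finset.mem_erase.mp this.2).1⟩
    · rintro ⟨hk, hi⟩
      exact Finset.mem_image.mpr ⟨(e, i), Finset.mem_product.mpr
        ⟨Finset.mem_filter.mpr ⟨Finset.mem_univ _, hk⟩,
         Finset.mem_erase.mpr ⟨hi, Finset.mem_univ _⟩⟩, rfl⟩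
  have hT1l : ∀ u : V, (Sum.inl u : V ⊕ (EE G × Fin (Δ + 1))) ∉ T1 := by
    intro u h
    obtain ⟨f, -, heq⟩ := Finset.mem_image.mp (hT1def ▸ h)
    exact absurd heq (by simp)
  have hT2l : ∀ u : V, (Sum.inl u : V ⊕ (EE G × Fin (Δ + 1))) ∉ T2 := by
    intro u h
    obtain ⟨f, -, heq⟩ := Finset.mem_image.mp (hT2def ▸ h)
    exact absurd heq (by simp)
  have hS1r : ∀ (e : EE G) (i : Fin (Δ + 1)),
      (Sum.inr (e, i) : V ⊕ (EE G × Fin (Δ + 1))) ∈ S1 ↔ (k e ∨ i ≠ 0) := by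
    intro e i
    rw [hS1def, Finset.mem_sdiff, hT1r]
    simp only [Finset.mem_univ, true_and]
    tauto
  have hS2r : ∀ (e : EE G) (i : Fin (Δ + 1)),
      (Sum.inr (e, i) : V ⊕ (EE G × Fin (Δ + 1))) ∈ S2 ↔ k e := by
    intro e i
    rw [hS2def, Finset.mem_sdiff, hS1r, hT2r]
    tauto
  have hS1l : ∀ u : V, (Sum.inl u : V ⊕ (EE G × Fin (Δ + 1))) ∈ S1 := by
    intro u
    rw [hS1def, Finset.mem_sdiff]
    exact ⟨Finset.mem_univ _, hT1l u⟩
  have hS2l : ∀ u : V, (Sum.inl u : V ⊕ (EE G × Fin (Δ + 1))) ∈ S2 := by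
    intro u
    rw [hS2def, Finset.mem_sdiff]
    exact ⟨hS1l u, hT2l u⟩
  -- cardinalities
  have hT1card : T1.card = G.edgeFinset.card := by
    rw [hT1def, Finset.card_image_of_injective _ (by intro e f h; simpa using h)]
    have hco := card_orient (G := G) (fun e => ¬ k e) notk_or (fun e h => notk_nand e h)
    convert hco using 2
    exact (Finset.filter_congr_decidable _ _ _).symm
  have hT2card : T2.card = G.edgeFinset.card * Δ := by
    rw [hT2def, Finset.card_image_of_injective _
      (by rintro ⟨e, i⟩ ⟨f, j⟩ h; simpa [Prod.ext_iff] using h)]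
    rw [Finset.card_product]
    have hco := card_orient (G := G) (fun e => ¬ k e) notk_or (fun e h => notk_nand e h)
    have h1 : (Finset.filter (fun e => ¬ k e) Finset.univ).card = G.edgeFinset.card := by
      convert hco using 2
      exact (Finset.filter_congr_decidable _ _ _).symm
    rw [h1, Finset.card_erase_of_mem (Finset.mem_univ _)]
    simp
  have hT3card : T3.card = C.card := by
    rw [hT3def]
    exact Finset.card_image_of_injective _ Sum.inl_injective
  -- Phase 3
  obtain ⟨L3, hlen3, hrun3⟩ := runB H T3.card T3 S2 rfl
    (by
      intro x hx
      obtain ⟨c, -, rfl⟩ := Finset.mem_image.mp (hT3def ▸ hx)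
      exact hS2l c)
    (by
      rintro t ht x hx hadj
      obtain ⟨c, hcC, rfl⟩ := Finset.mem_image.mp (hT3def ▸ ht)
      rcases x with u | ⟨e, i⟩
      · exact absurd hadj (adj_ll Δ c u)
      · obtain ⟨h1, rfl⟩ := (adj_lr Δ c e i).mp hadj
        constructor
        · intro hmem
          obtain ⟨c', -, heq⟩ := Finset.mem_image.mp (hT3def ▸ hmem)
          exact absurd heq (by simp)
        · rintro t' ht' hne hadj'
          obtain ⟨c', -, rfl⟩ := Finset.mem_image.mp (hT3def ▸ ht')
          obtain ⟨h1', -⟩ := (adj_lr Δ c' e 0).mp hadj'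
          exact hne (by rw [h1', h1])
    )
    (by
      rintro (u | ⟨e, i⟩) hu (w | ⟨f, j⟩) hw hadj
      · exact absurd hadj (adj_ll Δ u w)
      · obtain ⟨rfl, rfl⟩ := (adj_lr Δ u f j).mp hadj
        left
        rw [hT3def]
        exact Finset.mem_image.mpr ⟨f.1.1, hkC f ((hS2r f 0).mp hw), rfl⟩
      · obtain ⟨rfl, rfl⟩ := (adj_rl Δ w e i).mp hadj
        right
        rw [hT3def]
        exact Finset.mem_image.mpr ⟨e.1.1, hkC e ((hS2r e 0).mp hu), rfl⟩
      · obtain rfl := (adj_rr Δ e f i j).mp hadj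
        exact absurd ((hS2r _ j).mp hw) (k_nand e ((hS2r e i).mp hu)))
    (by
      rintro t ht
      obtain ⟨c, hcC, rfl⟩ := Finset.mem_image.mp (hT3def ▸ ht)
      obtain ⟨e, hke, hec⟩ := hforce c hcC
      have h1 : ({Sum.inr (e, (0 : Fin (Δ + 1)))} :
          Finset (V ⊕ (EE G × Fin (Δ + 1)))).card ≤ degIn H S2 (Sum.inl c) := by
        apply le_degIn_of
        · intro y hy
          rw [Finset.mem_singleton] at hy
          subst hy
          exact (hS2r e 0).mpr hke
        · intro y hy
          rw [Finset.mem_singleton] at hy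
          subst hy
          exact (adj_lr Δ c e 0).mpr ⟨hec.symm, rfl⟩
      simpa using h1)
  -- Phase 2
  obtain ⟨L2, hlen2, hrun2⟩ := runA H T2.card T2 S1 S2 rfl
    (by
      intro x hx
      obtain ⟨⟨e, j⟩, hf, rfl⟩ := Finset.mem_image.mp (hT2def ▸ hx)
      have := Finset.mem_product.mp hf
      exact (hS1r e j).mpr (Or.inr (Finset.mem_erase.mp this.2).1))
    (by
      intro x hx
      rw [hS2def, Finset.mem_sdiff] at hx
      exact hx)
    (by
      intro x hx hxT
      rw [hS2def, Finset.mem_sdiff]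
      exact ⟨hx, hxT⟩)
    (by
      intro v hv S' hS'1 hS'2 hvS' u hu
      obtain ⟨⟨e, j⟩, hf, rfl⟩ := Finset.mem_image.mp (hT2def ▸ hv)
      have hprod := Finset.mem_product.mp hf
      have hke : ¬ k e := (Finset.mem_filter.mp hprod.1).2
      have hkse : k (swapE G e) := (k_or e).resolve_left hke
      have hS2sub : S2 ⊆ S' := hS'1
      have hlow : Δ + 1 ≤ degIn H S' (Sum.inr (e, j)) := by
        have hle : (sideAll Δ (swapE G e)).card ≤ degIn H S' (Sum.inr (e, j)) := by
          apply le_degIn_of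
          · intro y hy
            obtain ⟨j', -, rfl⟩ := Finset.mem_image.mp hy
            exact hS2sub ((hS2r _ j').mpr hkse)
          · intro y hy
            obtain ⟨j', -, rfl⟩ := Finset.mem_image.mp hy
            exact (adj_rr Δ e (swapE G e) j j').mpr rfl
        rwa [card_sideAll] at hle
      refine le_trans ?_ hlow
      rcases u with w | ⟨f, i⟩
      · exact (degIn_inl_le Δ S' w).trans ((hΔ w).trans (by omega))
      · rcases (hS1r f i).mp (hS'2 hu) with hkf | hi
        · apply degIn_inr_le_head
          intro hmem
          have := (hS1r (swapE G f) 0).mp (hS'2 hmem)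
          rcases this with h | h
          · exact k_nand f hkf h
          · exact h rfl
        · exact degIn_inr_le_tail Δ S' f i hi)
    L3 hrun3
  -- Phase 1
  obtain ⟨L1, hlen1, hrun1⟩ := runA H T1.card T1 Finset.univ S1 rfl (Finset.subset_univ _)
    (by
      intro x hx
      rw [hS1def, Finset.mem_sdiff] at hx
      exact ⟨Finset.mem_univ _, hx.2⟩)
    (by
      intro x hx hxT
      rw [hS1def, Finset.mem_sdiff]
      exact ⟨Finset.mem_univ _, hxT⟩)
    (by
      intro v hv S' hS'1 hS'2 hvS' u hu
      obtain ⟨e, hf, rfl⟩ := Finset.mem_image.mp (hT1def ▸ hv)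
      have hke : ¬ k e := (Finset.mem_filter.mp hf).2
      have hkse : k (swapE G e) := (k_or e).resolve_left hke
      have hS1sub : S1 ⊆ S' := hS'1
      have hlow : Δ + 2 ≤ degIn H S' (Sum.inr (e, (0 : Fin (Δ + 1)))) := by
        have hcard : (sideAll Δ (swapE G e) ∪ {Sum.inl e.1.1}).card = Δ + 2 := by
          rw [Finset.card_union_of_disjoint
            (Finset.disjoint_singleton_right.mpr (inl_not_mem_sideAll Δ _ _)),
            card_sideAll]
          simp
        refine hcard ▸ ?_
        apply le_degIn_of
        · intro y hy
          rcases Finset.mem_union.mp hy with hy | hy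
          · obtain ⟨j', -, rfl⟩ := Finset.mem_image.mp hy
            exact hS1sub ((hS1r _ j').mpr (Or.inl hkse))
          · rw [Finset.mem_singleton] at hy
            subst hy
            exact hS1sub (hS1l _)
        · intro y hy
          rcases Finset.mem_union.mp hy with hy | hy
          · obtain ⟨j', -, rfl⟩ := Finset.mem_image.mp hy
            exact (adj_rr Δ e (swapE G e) 0 j').mpr rfl
          · rw [Finset.mem_singleton] at hy
            subst hy
            exact (adj_rl Δ e.1.1 e 0).mpr ⟨rfl, rfl⟩
      refine le_trans ?_ hlow
      rcases u with w | ⟨f, i⟩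
      · exact (degIn_inl_le Δ S' w).trans ((hΔ w).trans (by omega))
      · exact degIn_inr_le_all Δ S' f i)
    (L2 ++ L3) hrun2
  refine ⟨L1 ++ (L2 ++ L3), ?_, hrun1⟩
  rw [List.length_append, List.length_append, hlen1, hlen2, hlen3,
    hT1card, hT2card, hT3card]
  ring

lemma vc_lower [Fintype V] (CH : Finset (V ⊕ (EE G × Fin (Δ + 1))))
    (hCH : IsVC (mdgGadget G Δ) CH) :
    mvc G + G.edgeFinset.card * (Δ + 1) ≤ CH.card := by
  classical
  set c0 : Sym2 V → V := fun m => (Quot.out m).1 with hc0def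
  have hc_or : ∀ e : EE G, c0 (Sym2.mk e.1.1 e.1.2) = e.1.1 ∨ c0 (Sym2.mk e.1.1 e.1.2) = e.1.2 := by
    rintro ⟨⟨a, b⟩, hab⟩
    have := Sym2.out_fst_mem (Sym2.mk a b)
    simpa [Sym2.mem_iff] using this
  set prim : EE G → Prop := keepc c0 with hprimdef
  have prim_or : ∀ e : EE G, prim e ∨ prim (swapE G e) := keep_or hc_or
  have prim_nand : ∀ e : EE G, prim e → ¬ prim (swapE G e) := fun e h1 h2 => keep_nand e h1 h2
  set CV : Finset V := Finset.univ.filter (fun v : V => Sum.inl v ∈ CH) with hCVdef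
  set p : EE G → ℕ := fun e =>
    (Finset.univ.filter fun i : Fin (Δ + 1) => (Sum.inr (e, i) : V ⊕ (EE G × Fin (Δ + 1))) ∈ CH).card
    with hpdef
  have hple : ∀ e : EE G, p e ≤ Δ + 1 := by
    intro e
    rw [hpdef]
    calc (Finset.univ.filter fun i : Fin (Δ + 1) => (Sum.inr (e, i) : _) ∈ CH).card
        ≤ (Finset.univ : Finset (Fin (Δ + 1))).card := Finset.card_le_card (Finset.filter_subset _ _)
      _ = Δ + 1 := by simp
  have hfull : ∀ e : EE G, p e = Δ + 1 →
      ∀ i : Fin (Δ + 1), (Sum.inr (e, i) : V ⊕ (EE G × Fin (Δ + 1))) ∈ CH := by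
    intro e he i
    have hcard : (Finset.univ.filter fun i : Fin (Δ + 1) =>
        (Sum.inr (e, i) : V ⊕ (EE G × Fin (Δ + 1))) ∈ CH).card = Δ + 1 := he
    have huniv : (Finset.univ.filter fun i : Fin (Δ + 1) =>
        (Sum.inr (e, i) : V ⊕ (EE G × Fin (Δ + 1))) ∈ CH) = Finset.univ :=
      Finset.eq_univ_of_card _ (by rw [hcard]; simp)
    have hmem := huniv ▸ Finset.mem_univ i
    exact (Finset.mem_filter.mp hmem).2
  have hmiss : ∀ e : EE G, p e ≠ Δ + 1 →
      ∃ i : Fin (Δ + 1), (Sum.inr (e, i) : V ⊕ (EE G × Fin (Δ + 1))) ∉ CH := by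
    intro e he
    by_contra h
    push_neg at h
    apply he
    show (Finset.univ.filter fun i : Fin (Δ + 1) =>
        (Sum.inr (e, i) : V ⊕ (EE G × Fin (Δ + 1))) ∈ CH).card = Δ + 1
    have huniv : (Finset.univ.filter fun i : Fin (Δ + 1) =>
        (Sum.inr (e, i) : V ⊕ (EE G × Fin (Δ + 1))) ∈ CH) = Finset.univ :=
      Finset.eq_univ_iff_forall.mpr (fun i => Finset.mem_filter.mpr ⟨Finset.mem_univ _, h i⟩)
    rw [huniv]
    simp
  have claim0 : ∀ e : EE G, p e = Δ + 1 ∨ p (swapE G e) = Δ + 1 := by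
    intro e
    by_contra h
    push_neg at h
    obtain ⟨i, hi⟩ := hmiss e h.1
    obtain ⟨j, hj⟩ := hmiss (swapE G e) h.2
    have hadj : (mdgGadget G Δ).Adj (.inr (e, i)) (.inr (swapE G e, j)) :=
      (adj_rr Δ e (swapE G e) i j).mpr rfl
    rcases hCH hadj with h' | h'
    · exact hi h'
    · exact hj h'
  have claim1 : ∀ e : EE G, Δ + 1 ≤ p e + p (swapE G e) := by
    intro e
    rcases claim0 e with h | h <;> omega
  have hzero : ∀ e : EE G, p e = 0 →
      (Sum.inr (e, (0 : Fin (Δ + 1))) : V ⊕ (EE G × Fin (Δ + 1))) ∉ CH := by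
    intro e he hmem
    have h1 : (0 : Fin (Δ + 1)) ∈
        (Finset.univ.filter fun i : Fin (Δ + 1) =>
          (Sum.inr (e, i) : V ⊕ (EE G × Fin (Δ + 1))) ∈ CH) :=
      Finset.mem_filter.mpr ⟨Finset.mem_univ _, hmem⟩
    have h2 : (Finset.univ.filter fun i : Fin (Δ + 1) =>
        (Sum.inr (e, i) : V ⊕ (EE G × Fin (Δ + 1))) ∈ CH).card = 0 := he
    rw [Finset.card_eq_zero] at h2
    rw [h2] at h1
    exact absurd h1 (Finset.notMem_empty _)
  have claim2 : ∀ e : EE G, p e + p (swapE G e) = Δ + 1 → e.1.1 ∈ CV ∨ e.1.2 ∈ CV := by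
    intro e hsum
    rcases claim0 e with h | h
    · -- p (swapE e) = 0, pendant of swapE e forces inl e.1.2 ∈ CH
      right
      have h0 : p (swapE G e) = 0 := by omega
      have hnot := hzero _ h0
      have hadj : (mdgGadget G Δ).Adj (.inl ((swapE G e).1.1)) (.inr (swapE G e, 0)) :=
        (adj_lr Δ _ _ _).mpr ⟨rfl, rfl⟩
      rcases hCH hadj with h' | h'
      · rw [hCVdef]
        exact Finset.mem_filter.mpr ⟨Finset.mem_univ _, h'⟩
      · exact absurd h' hnot
    · left
      have h0 : p e = 0 := by
        have := hple (swapE G e)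
        omega
      have hnot := hzero _ h0
      have hadj : (mdgGadget G Δ).Adj (.inl (e.1.1)) (.inr (e, 0)) :=
        (adj_lr Δ _ _ _).mpr ⟨rfl, rfl⟩
      rcases hCH hadj with h' | h'
      · rw [hCVdef]
        exact Finset.mem_filter.mpr ⟨Finset.mem_univ _, h'⟩
      · exact absurd h' hnot
  set X : Finset (EE G) :=
    Finset.univ.filter (fun e : EE G => prim e ∧ e.1.1 ∉ CV ∧ e.1.2 ∉ CV) with hXdef
  have hXex : ∀ e ∈ X, Δ + 2 ≤ p e + p (swapE G e) := by
    intro e he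
    rw [hXdef, Finset.mem_filter] at he
    have h1 := claim1 e
    rcases Nat.lt_or_ge (p e + p (swapE G e)) (Δ + 2) with h | h
    · have heq : p e + p (swapE G e) = Δ + 1 := by omega
      rcases claim2 e heq with h' | h'
      · exact absurd h' he.2.2.1
      · exact absurd h' he.2.2.2
    · exact h
  set C' : Finset V := CV ∪ X.image (fun e => e.1.1) with hC'def
  have hC' : IsVC G C' := by
    intro u w h
    rcases prim_or ⟨(u, w), h⟩ with hp | hp
    · by_cases h1 : u ∈ CV
      · exact Or.inl (Finset.mem_union_left _ h1)
      by_cases h2 : w ∈ CV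
      · exact Or.inr (Finset.mem_union_left _ h2)
      · refine Or.inl (Finset.mem_union_right _ ?_)
        exact Finset.mem_image.mpr ⟨⟨(u, w), h⟩,
          Finset.mem_filter.mpr ⟨Finset.mem_univ _, hp, h1, h2⟩, rfl⟩
    · by_cases h1 : w ∈ CV
      · exact Or.inr (Finset.mem_union_left _ h1)
      by_cases h2 : u ∈ CV
      · exact Or.inl (Finset.mem_union_left _ h2)
      · refine Or.inr (Finset.mem_union_right _ ?_)
        exact Finset.mem_image.mpr ⟨swapE G ⟨(u, w), h⟩,
          Finset.mem_filter.mpr ⟨Finset.mem_univ _, hp, h1, h2⟩, rfl⟩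
  have hmvc : mvc G ≤ CV.card + X.card :=
    le_trans (Nat.sInf_le ⟨C', hC', rfl⟩)
      (le_trans (hC'def ▸ Finset.card_union_le _ _)
        (by gcongr; exact Finset.card_image_le))
  -- counting
  have hsplit : (CH.filter (fun x => ∃ u : V, x = Sum.inl u)).card +
      (CH.filter (fun x => ¬ ∃ u : V, x = Sum.inl u)).card = CH.card := by
    have h := Finset.card_filter_add_card_filter_not
      (s := CH) (p := fun x : V ⊕ (EE G × Fin (Δ + 1)) => ∃ u : V, x = Sum.inl u)
    convert h using 3 <;> exact (Finset.filter_congr_decidable _ _ _).symm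
  have hleft : (CH.filter (fun x => ∃ u : V, x = Sum.inl u)).card = CV.card := by
    symm
    apply Finset.card_bij (fun (v : V) _ => (Sum.inl v : V ⊕ (EE G × Fin (Δ + 1))))
    · intro v hv
      rw [hCVdef, Finset.mem_filter] at hv
      exact Finset.mem_filter.mpr ⟨hv.2, v, rfl⟩
    · intro v _ w _ h
      simpa using h
    · rintro x hx
      obtain ⟨hx1, u, rfl⟩ := Finset.mem_filter.mp hx
      exact ⟨u, Finset.mem_filter.mpr ⟨Finset.mem_univ _, hx1⟩, rfl⟩
  have hright : (CH.filter (fun x => ¬ ∃ u : V, x = Sum.inl u)).card = ∑ e : EE G, p e := by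
    have heq : CH.filter (fun x => ¬ ∃ u : V, x = Sum.inl u) =
        Finset.univ.biUnion (fun e : EE G =>
          (Finset.univ.filter fun i : Fin (Δ + 1) => (Sum.inr (e, i) : _) ∈ CH).image
            (fun i => Sum.inr (e, i))) := by
      ext x
      constructor
      · intro hx
        obtain ⟨hx1, hx2⟩ := Finset.mem_filter.mp hx
        rcases x with u | ⟨e, i⟩
        · exact absurd ⟨u, rfl⟩ hx2
        · exact Finset.mem_biUnion.mpr ⟨e, Finset.mem_univ _,
            Finset.mem_image.mpr ⟨i, Finset.mem_filter.mpr ⟨Finset.mem_univ _, hx1⟩, rfl⟩⟩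
      · intro hx
        obtain ⟨e, -, hx⟩ := Finset.mem_biUnion.mp hx
        obtain ⟨i, hi, rfl⟩ := Finset.mem_image.mp hx
        exact Finset.mem_filter.mpr ⟨(Finset.mem_filter.mp hi).2, by simp⟩
    have hdisj : ∀ e ∈ (Finset.univ : Finset (EE G)), ∀ f ∈ (Finset.univ : Finset (EE G)),
        e ≠ f → Disjoint
          ((Finset.univ.filter fun i : Fin (Δ + 1) => (Sum.inr (e, i) : _) ∈ CH).image
            (fun i => (Sum.inr (e, i) : V ⊕ (EE G × Fin (Δ + 1)))))
          ((Finset.univ.filter fun i : Fin (Δ + 1) => (Sum.inr (f, i) : _) ∈ CH).image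
            (fun i => Sum.inr (f, i))) := by
      intro e _ f _ hef
      rw [Finset.disjoint_left]
      intro x hx hx'
      obtain ⟨i, -, rfl⟩ := Finset.mem_image.mp hx
      obtain ⟨j, -, heq'⟩ := Finset.mem_image.mp hx'
      apply hef
      have hfe : f = e ∧ j = i := by simpa [Prod.ext_iff] using heq'
      exact hfe.1.symm
    rw [heq, Finset.card_biUnion hdisj]
    apply Finset.sum_congr rfl
    intro e _
    rw [Finset.card_image_of_injective _ (inr_injective Δ e)]
  have hsum2 : ∑ e : EE G, p e =
      ∑ e ∈ Finset.univ.filter prim, (p e + p (swapE G e)) := by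
    rw [← Finset.sum_filter_add_sum_filter_not Finset.univ prim p, Finset.sum_add_distrib]
    congr 1
    apply Finset.sum_nbij' (fun e => swapE G e) (fun e => swapE G e)
    · intro e he
      rw [Finset.mem_filter] at he ⊢
      exact ⟨Finset.mem_univ _, (prim_or e).resolve_left he.2⟩
    · intro e he
      rw [Finset.mem_filter] at he ⊢
      exact ⟨Finset.mem_univ _, prim_nand e he.2⟩
    · intro e _; exact swapE_swapE e
    · intro e _; exact swapE_swapE e
    · intro e _; exact congrArg p (swapE_swapE e).symm
  have hbound : ∑ e ∈ Finset.univ.filter prim, ((Δ + 1) + if e ∈ X then 1 else 0) ≤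
      ∑ e ∈ Finset.univ.filter prim, (p e + p (swapE G e)) := by
    apply Finset.sum_le_sum
    intro e he
    by_cases hX : e ∈ X
    · rw [if_pos hX]
      have := hXex e hX
      omega
    · rw [if_neg hX]
      have := claim1 e
      omega
  have heval : ∑ e ∈ Finset.univ.filter prim, ((Δ + 1) + if e ∈ X then 1 else 0) =
      (Finset.univ.filter prim).card * (Δ + 1) + X.card := by
    rw [Finset.sum_add_distrib, Finset.sum_const, smul_eq_mul,
      Finset.sum_ite, Finset.sum_const, Finset.sum_const_zero, add_zero,
      smul_eq_mul, mul_one]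
    congr 1
    congr 1
    ext e
    rw [Finset.mem_filter, Finset.mem_filter]
    constructor
    · rintro ⟨-, h⟩; exact h
    · intro h
      refine ⟨⟨Finset.mem_univ _, ?_⟩, h⟩
      exact ((Finset.mem_filter.mp (hXdef ▸ h)).2).1
  have hm : (Finset.univ.filter prim).card = G.edgeFinset.card :=
    card_orient prim prim_or prim_nand
  rw [hm] at heval
  linarith

end Gadget


/-- For the MDG-gadget graph `H` of `G` (with `Δ = max-deg(G)`),
`min-mdg(H) = mvc(H)`; in fact `min-mdg(H) = mvc(G) + |E(G)|·(Δ + 1)`. -/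
theorem stmt10 {V : Type*} [Fintype V] (G : SimpleGraph V) :
    minMdg (mdgGadget G G.maxDegree) = mvc (mdgGadget G G.maxDegree) ∧
    minMdg (mdgGadget G G.maxDegree) =
      mvc G + G.edgeFinset.card * (G.maxDegree + 1) := by
  classical
  set Δ := G.maxDegree with hΔdef
  -- a minimum vertex cover of G
  have hne : {n | ∃ C : Finset V, IsVC G C ∧ C.card = n}.Nonempty :=
    ⟨Finset.univ.card, Finset.univ, fun u w _ => Or.inl (Finset.mem_univ u), rfl⟩
  obtain ⟨C, hC, hCcard⟩ := Nat.sInf_mem hne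
  have hCm : C.card = mvc G := hCcard
  have hCmin : ∀ c ∈ C, ∃ w, G.Adj c w ∧ w ∉ C := by
    intro c hc
    by_contra hcon
    push_neg at hcon
    have hvc : IsVC G (C.erase c) := by
      intro u w huw
      rcases hC huw with hu | hw
      · by_cases huc : u = c
        · subst huc
          exact Or.inr (Finset.mem_erase.mpr ⟨fun hwc => G.ne_of_adj huw hwc.symm,
            hcon w huw⟩)
        · exact Or.inl (Finset.mem_erase.mpr ⟨huc, hu⟩)
      · by_cases hwc : w = c
        · subst hwc
          exact Or.inl (Finset.mem_erase.mpr ⟨fun huc => G.ne_of_adj huw huc,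
            hcon u huw.symm⟩)
        · exact Or.inr (Finset.mem_erase.mpr ⟨hwc, hw⟩)
    have hle : mvc G ≤ (C.erase c).card := Nat.sInf_le ⟨C.erase c, hvc, rfl⟩
    rw [Finset.card_erase_of_mem hc] at hle
    have hpos : 1 ≤ C.card := Finset.card_pos.mpr ⟨c, hc⟩
    rw [hCm] at hpos hle
    omega
  have hΔle : ∀ v : V, G.degree v ≤ Δ := fun v => G.degree_le_maxDegree v
  obtain ⟨L, hL, hrun⟩ := exists_run Δ hΔle C hC hCmin
  have h1 : minMdg (mdgGadget G Δ) ≤ mvc G + G.edgeFinset.card * (Δ + 1) :=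
    Nat.sInf_le ⟨L, by rw [hL, hCm], hrun⟩
  have hne2 : {k | ∃ L' : List (V ⊕ ({p : V × V // G.Adj p.1 p.2} × Fin (Δ + 1))),
      L'.length = k ∧ IsMDGRun (mdgGadget G Δ) L' Finset.univ}.Nonempty :=
    ⟨L.length, L, rfl, hrun⟩
  have h3 : mvc (mdgGadget G Δ) ≤ minMdg (mdgGadget G Δ) :=
    mvc_le_minMdg (mdgGadget G Δ) hne2
  have h2 : mvc G + G.edgeFinset.card * (Δ + 1) ≤ mvc (mdgGadget G Δ) := by
    have hvcne : {n | ∃ CH : Finset (V ⊕ ({p : V × V // G.Adj p.1 p.2} × Fin (Δ + 1))),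
        IsVC (mdgGadget G Δ) CH ∧ CH.card = n}.Nonempty :=
      ⟨Finset.univ.card, Finset.univ, fun u w _ => Or.inl (Finset.mem_univ u), rfl⟩
    obtain ⟨CH, hCH, hCHcard⟩ := Nat.sInf_mem hvcne
    have := vc_lower Δ CH hCH
    rw [hCHcard] at this
    exact this
  exact ⟨by omega, by omega⟩

end
end

section
/- Let ℓ and m be integers with 1 ≤ m < ℓ and gcd(ℓ − m, m) = 1, and let G₁ and G₂ be finite simple graphs with mvc(G₁) ≤ mvc(G₂). Then there exist a finite simple graph Ĝ and positive integers p and q such that m·min-mdg(Ĝ) = ℓ·(p·mvc(G₂) + q) and mvc(Ĝ) = p·mvc(G₁) + q. -/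
open scoped Classical

noncomputable section

namespace Stmt17Aux

variable {α β : Type*}

/-- A run always exists. -/
lemma run_exists_any (G : SimpleGraph α) (S : Finset α) : ∃ L : List α, IsMDGRun G L S := by
  induction S using Finset.strongInductionOn with
  | _ S ih =>
    by_cases hE : ∀ u ∈ S, ∀ w ∈ S, ¬ G.Adj u w
    · exact ⟨[], hE⟩
    · have hne : S.Nonempty := by
        by_contra h
        rw [Finset.not_nonempty_iff_eq_empty] at h
        subst h; simp at hE
      obtain ⟨v, hv, hmax⟩ := S.exists_max_image (degIn G S) hne
      obtain ⟨L, hL⟩ := ih (S.erase v) (Finset.erase_ssubset hv)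
      exact ⟨v :: L, hv, hmax, hL⟩

/-- After a run, no edges remain among unremoved vertices. -/
lemma run_cover {G : SimpleGraph α} : ∀ {L : List α} {S : Finset α}, IsMDGRun G L S →
    ∀ x ∈ S, x ∉ L → ∀ y ∈ S, y ∉ L → ¬ G.Adj x y
  | [], S, h => fun x hx _ y hy _ => h x hx y hy
  | v :: L, S, h => by
    intro x hx hxL y hy hyL hadj
    have hx' : x ∈ S.erase v := Finset.mem_erase.2 ⟨fun h' => hxL (h' ▸ List.mem_cons_self), hx⟩
    have hy' : y ∈ S.erase v := Finset.mem_erase.2 ⟨fun h' => hyL (h' ▸ List.mem_cons_self), hy⟩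
    exact run_cover h.2.2 x hx' (fun h' => hxL (List.mem_cons_of_mem _ h')) y hy'
      (fun h' => hyL (List.mem_cons_of_mem _ h')) hadj

/-- Transport a graph along an equivalence. -/
def transport (e : α ≃ β) (G : SimpleGraph α) : SimpleGraph β where
  Adj x y := G.Adj (e.symm x) (e.symm y)
  symm := ⟨fun _ _ h => G.adj_symm h⟩
  loopless := ⟨fun x h => G.loopless.irrefl _ h⟩

lemma transport_transport (e : α ≃ β) (G : SimpleGraph α) :
    transport e.symm (transport e G) = G := by
  ext x y; simp [transport]

lemma degIn_transport (e : α ≃ β) (G : SimpleGraph α) (S : Finset α) (v : α) :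
    degIn (transport e G) (S.image e) (e v) = degIn G S v := by
  unfold degIn
  rw [show ((S.image e).filter fun w => (transport e G).Adj (e v) w)
      = (S.filter fun w => G.Adj v w).image e by
    ext w
    simp only [Finset.mem_filter, Finset.mem_image]
    constructor
    · rintro ⟨⟨a, ha, rfl⟩, hadj⟩
      exact ⟨a, ⟨ha, by simpa [transport] using hadj⟩, rfl⟩
    · rintro ⟨a, ⟨ha, hadj⟩, rfl⟩
      exact ⟨⟨a, ha, rfl⟩, by simpa [transport] using hadj⟩]
  exact Finset.card_image_of_injective _ e.injective

lemma run_map (e : α ≃ β) (G : SimpleGraph α) :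
    ∀ {L : List α} {S : Finset α}, IsMDGRun G L S →
      IsMDGRun (transport e G) (L.map e) (S.image e)
  | [], S, h => by
    intro u hu w hw hadj
    obtain ⟨a, ha, rfl⟩ := Finset.mem_image.1 hu
    obtain ⟨b, hb, rfl⟩ := Finset.mem_image.1 hw
    exact h a ha b hb (by simpa [transport] using hadj)
  | v :: L, S, h => by
    refine ⟨Finset.mem_image_of_mem e h.1, ?_, ?_⟩
    · intro u hu
      obtain ⟨a, ha, rfl⟩ := Finset.mem_image.1 hu
      rw [degIn_transport, degIn_transport]
      exact h.2.1 a ha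
    · rw [← Finset.image_erase e.injective]
      exact run_map e G h.2.2

lemma image_univ_equiv [Fintype α] [Fintype β] (e : α ≃ β) :
    (Finset.univ : Finset α).image e = Finset.univ := by
  ext x
  simp only [Finset.mem_univ, iff_true, Finset.mem_image]
  exact ⟨e.symm x, by simp⟩

lemma minMdg_transport [Fintype α] [Fintype β] (e : α ≃ β) (G : SimpleGraph α) :
    minMdg (transport e G) = minMdg G := by
  unfold minMdg
  congr 1
  ext k
  constructor
  · rintro ⟨L, hlen, hrun⟩
    refine ⟨L.map e.symm, by simpa using hlen, ?_⟩
    have := run_map e.symm (transport e G) hrun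
    rwa [transport_transport, image_univ_equiv] at this
  · rintro ⟨L, hlen, hrun⟩
    refine ⟨L.map e, by simpa using hlen, ?_⟩
    have := run_map e G hrun
    rwa [image_univ_equiv] at this

lemma mvc_transport [Fintype α] [Fintype β] (e : α ≃ β) (G : SimpleGraph α) :
    mvc (transport e G) = mvc G := by
  unfold mvc
  congr 1
  ext k
  constructor
  · rintro ⟨C, hC, hcard⟩
    refine ⟨C.image e.symm, ?_, by rwa [Finset.card_image_of_injective _ e.symm.injective]⟩
    intro u w hadj
    have := hC (show (transport e G).Adj (e u) (e w) by simpa [transport] using hadj)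
    rcases this with h | h
    · exact Or.inl (by simpa using Finset.mem_image_of_mem e.symm h)
    · exact Or.inr (by simpa using Finset.mem_image_of_mem e.symm h)
  · rintro ⟨C, hC, hcard⟩
    refine ⟨C.image e, ?_, by rwa [Finset.card_image_of_injective _ e.injective]⟩
    intro u w hadj
    have := hC (show G.Adj (e.symm u) (e.symm w) from hadj)
    rcases this with h | h
    · exact Or.inl (by simpa using Finset.mem_image_of_mem e h)
    · exact Or.inr (by simpa using Finset.mem_image_of_mem e h)

end Stmt17Aux

namespace Stmt17Aux

section Gadget

variable (K n : ℕ) (c : Fin K → ℕ)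

/-- Vertex type: L-vertices, pendant vertices, and w-vertices. -/
abbrev GV := Fin n ⊕ (Fin n ⊕ (Σ k : Fin K, Fin (c k)))

/-- block size of level k -/
def bsz (k : ℕ) : ℕ := K + 2 - k

def gadj : GV K n c → GV K n c → Prop
  | .inl u, .inr (.inl v) => u = v
  | .inr (.inl v), .inl u => u = v
  | .inl u, .inr (.inr ⟨k, j⟩) => (j : ℕ) * bsz K k ≤ (u : ℕ) ∧ (u : ℕ) < (j : ℕ) * bsz K k + bsz K k
  | .inr (.inr ⟨k, j⟩), .inl u => (j : ℕ) * bsz K k ≤ (u : ℕ) ∧ (u : ℕ) < (j : ℕ) * bsz K k + bsz K k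
  | _, _ => False

def HG : SimpleGraph (GV K n c) where
  Adj := gadj K n c
  symm := by
    constructor
    rintro (u | u | ⟨k, j⟩) (v | v | ⟨k', j'⟩) h <;> simp_all [gadj]
  loopless := by
    constructor
    rintro (u | u | ⟨k, j⟩) h <;> simp_all [gadj]

variable {K n c}

lemma deg_pend_le (S : Finset (GV K n c)) (x : Fin n) :
    degIn (HG K n c) S (Sum.inr (Sum.inl x)) ≤ 1 := by
  unfold degIn
  refine Finset.card_le_one.2 ?_
  rintro a ha b hb
  rcases Finset.mem_filter.1 ha with ⟨-, ha⟩
  rcases Finset.mem_filter.1 hb with ⟨-, hb⟩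
  rcases a with u | u | ⟨k, j⟩ <;> rcases b with v | v | ⟨k', j'⟩ <;>
    simp_all [HG, gadj]

lemma deg_L_le (S : Finset (GV K n c)) (u : Fin n) (k₀ : ℕ) (hk₀ : k₀ ≤ K)
    (hS : ∀ (k : Fin K) (j : Fin (c k)), Sum.inr (Sum.inr ⟨k, j⟩) ∈ S → k₀ ≤ (k : ℕ)) :
    degIn (HG K n c) S (Sum.inl u) ≤ K + 1 - k₀ := by
  unfold degIn
  have := Finset.card_le_card_of_injOn
    (f := fun x : GV K n c => match x with
      | .inr (.inl _) => K
      | .inr (.inr ⟨k, _⟩) => (k : ℕ)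
      | .inl _ => 0)
    (s := S.filter fun w => (HG K n c).Adj (Sum.inl u) w) (t := Finset.Icc k₀ K) ?_ ?_
  · simpa [Nat.card_Icc] using this
  · rintro (v | v | ⟨k, j⟩) hx <;> rcases Finset.mem_filter.1 hx with ⟨hxS, hadj⟩
    · exact absurd hadj (by simp [HG, gadj])
    · simp [Finset.mem_Icc, hk₀]
    · simp only [Finset.mem_coe, Finset.mem_Icc]
      exact ⟨hS k j hxS, Nat.le_of_lt_succ (Nat.lt_succ_of_lt k.2)⟩
  · rintro (v | v | ⟨k, j⟩) hx (v' | v' | ⟨k', j'⟩) hx' hf <;>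
      rcases Finset.mem_filter.1 hx with ⟨hxS, hadj⟩ <;>
      rcases Finset.mem_filter.1 hx' with ⟨hxS', hadj'⟩
    · exact absurd hadj (by simp [HG, gadj])
    · exact absurd hadj (by simp [HG, gadj])
    · exact absurd hadj (by simp [HG, gadj])
    · exact absurd hadj' (by simp [HG, gadj])
    · have h1 : u = v := by simpa [HG, gadj] using hadj
      have h2 : u = v' := by simpa [HG, gadj] using hadj'
      rw [← h1, ← h2]
    · exact absurd hf (by simpa using (Nat.ne_of_gt k'.2))
    · exact absurd hadj' (by simp [HG, gadj])
    · exact absurd hf (by simpa using (Nat.ne_of_lt k.2))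
    · -- two w's at same level adjacent to u
      have hk : (k : ℕ) = (k' : ℕ) := by simpa using hf
      have hkk : k = k' := Fin.ext hk
      subst hkk
      have hb1 : (j : ℕ) * bsz K k ≤ (u : ℕ) ∧ (u : ℕ) < (j : ℕ) * bsz K k + bsz K k := by
        simpa [HG, gadj] using hadj
      have hb2 : (j' : ℕ) * bsz K k ≤ (u : ℕ) ∧ (u : ℕ) < (j' : ℕ) * bsz K k + bsz K k := by
        simpa [HG, gadj] using hadj'
      have hbpos : 0 < bsz K k := by
        have := k.2; unfold bsz; omega
      have : (j : ℕ) = (j' : ℕ) := by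
        have h1 : (u : ℕ) / bsz K k = (j : ℕ) :=
          Nat.div_eq_of_lt_le hb1.1 (by rw [Nat.succ_mul]; exact hb1.2)
        have h2 : (u : ℕ) / bsz K k = (j' : ℕ) :=
          Nat.div_eq_of_lt_le hb2.1 (by rw [Nat.succ_mul]; exact hb2.2)
        omega
      have : j = j' := Fin.ext this
      rw [this]

lemma deg_w_le (S : Finset (GV K n c)) (k : Fin K) (j : Fin (c k)) :
    degIn (HG K n c) S (Sum.inr (Sum.inr ⟨k, j⟩)) ≤ bsz K k := by
  unfold degIn
  have := Finset.card_le_card_of_injOn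
    (f := fun x : GV K n c => match x with
      | .inl u => (u : ℕ)
      | _ => 0)
    (s := S.filter fun w => (HG K n c).Adj (Sum.inr (Sum.inr ⟨k, j⟩)) w)
    (t := Finset.Ico ((j : ℕ) * bsz K k) ((j : ℕ) * bsz K k + bsz K k)) ?_ ?_
  · simpa using this
  · rintro (v | v | ⟨k', j'⟩) hx <;> rcases Finset.mem_filter.1 hx with ⟨hxS, hadj⟩
    · simp only [Finset.mem_Ico]
      simpa [HG, gadj] using hadj
    · exact absurd hadj (by simp [HG, gadj])
    · exact absurd hadj (by simp [HG, gadj])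
  · rintro (v | v | ⟨k', j'⟩) hx (w | w | ⟨k'', j''⟩) hx' hf <;>
      rcases Finset.mem_filter.1 hx with ⟨hxS, hadj⟩ <;>
      rcases Finset.mem_filter.1 hx' with ⟨hxS', hadj'⟩
    all_goals try simp [HG, gadj] at hadj
    all_goals try simp [HG, gadj] at hadj'
    all_goals exact congrArg Sum.inl (Fin.ext (by simpa using hf))

lemma deg_w_eq (S : Finset (GV K n c)) (k : Fin K) (j : Fin (c k))
    (hcb : (c k) * bsz K (k : ℕ) ≤ n)
    (hL : ∀ u : Fin n, Sum.inl u ∈ S) :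
    degIn (HG K n c) S (Sum.inr (Sum.inr ⟨k, j⟩)) = bsz K k := by
  refine le_antisymm (deg_w_le S k j) ?_
  unfold degIn
  have hub : (j : ℕ) * bsz K k + bsz K k ≤ n := by
    calc (j : ℕ) * bsz K k + bsz K k = ((j : ℕ) + 1) * bsz K k := by ring
    _ ≤ c k * bsz K k := Nat.mul_le_mul_right _ j.2
    _ ≤ n := hcb
  have hbpos : 0 < bsz K (k : ℕ) := by
    have := k.2; unfold bsz; omega
  have hn : 0 < n := lt_of_lt_of_le (by positivity) hub
  have := Finset.card_le_card_of_injOn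
    (f := fun x : ℕ => (Sum.inl (⟨x % n, Nat.mod_lt x hn⟩ : Fin n) : GV K n c))
    (s := Finset.Ico ((j : ℕ) * bsz K k) ((j : ℕ) * bsz K k + bsz K k))
    (t := S.filter fun w => (HG K n c).Adj (Sum.inr (Sum.inr ⟨k, j⟩)) w) ?_ ?_
  · simpa using this
  · intro x hx
    rcases Finset.mem_Ico.1 hx with ⟨h1, h2⟩
    have hxn : x < n := lt_of_lt_of_le h2 hub
    refine Finset.mem_filter.2 ⟨hL _, ?_⟩
    have hgoal : (j : ℕ) * bsz K (k : ℕ) ≤ x % n ∧ x % n < (j : ℕ) * bsz K (k : ℕ) + bsz K (k : ℕ) := by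
      rw [Nat.mod_eq_of_lt hxn]; exact ⟨h1, h2⟩
    exact hgoal
  · intro x hx y hy hf
    rcases Finset.mem_Ico.1 hx with ⟨h1, h2⟩
    rcases Finset.mem_Ico.1 hy with ⟨h1', h2'⟩
    have hxn : x < n := lt_of_lt_of_le h2 hub
    have hyn : y < n := lt_of_lt_of_le h2' hub
    simp only [Sum.inl.injEq, Fin.mk.injEq] at hf
    rwa [Nat.mod_eq_of_lt hxn, Nat.mod_eq_of_lt hyn] at hf

lemma deg_L_ge_one (S : Finset (GV K n c)) (u : Fin n)
    (hP : Sum.inr (Sum.inl u) ∈ S) : 1 ≤ degIn (HG K n c) S (Sum.inl u) := by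
  unfold degIn
  rw [Nat.one_le_iff_ne_zero, ← Nat.pos_iff_ne_zero, Finset.card_pos]
  exact ⟨Sum.inr (Sum.inl u), Finset.mem_filter.2 ⟨hP, by simp [HG, gadj]⟩⟩

lemma deg_L_le_one_noW (S : Finset (GV K n c)) (u : Fin n)
    (hW : ∀ (k : Fin K) (j : Fin (c k)), Sum.inr (Sum.inr ⟨k, j⟩) ∉ S) :
    degIn (HG K n c) S (Sum.inl u) ≤ 1 := by
  unfold degIn
  refine Finset.card_le_one.2 ?_
  rintro a ha b hb
  rcases Finset.mem_filter.1 ha with ⟨haS, ha⟩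
  rcases Finset.mem_filter.1 hb with ⟨hbS, hb⟩
  rcases a with v | v | ⟨k, j⟩
  · exact absurd ha (by simp [HG, gadj])
  · rcases b with w | w | ⟨k', j'⟩
    · exact absurd hb (by simp [HG, gadj])
    · have h1 : u = v := by simpa [HG, gadj] using ha
      have h2 : u = w := by simpa [HG, gadj] using hb
      rw [← h1, ← h2]
    · exact absurd hbS (hW _ _)
  · exact absurd haS (hW _ _)

end Gadget

end Stmt17Aux

namespace Stmt17Aux

section Gadget2

variable {K n : ℕ} {c : Fin K → ℕ}

/-- The set of gadget (w) vertices remaining in S. -/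
def Wset (S : Finset (GV K n c)) : Finset (GV K n c) :=
  S.filter fun x => match x with | .inr (.inr _) => True | _ => False

lemma mem_Wset {S : Finset (GV K n c)} {x : GV K n c} :
    x ∈ Wset S ↔ x ∈ S ∧ ∃ (k : Fin K) (j : Fin (c k)), x = Sum.inr (Sum.inr ⟨k, j⟩) := by
  unfold Wset
  rw [Finset.mem_filter]
  constructor
  · rintro ⟨hS, hm⟩
    refine ⟨hS, ?_⟩
    rcases x with u | u | ⟨k, j⟩
    · simp at hm
    · simp at hm
    · exact ⟨k, j, rfl⟩
  · rintro ⟨hS, k, j, rfl⟩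
    exact ⟨hS, by simp⟩

lemma erase_indep {α : Type*} {i1 i2 : DecidableEq α} (S : Finset α) (v : α) :
    @Finset.erase α i1 S v = @Finset.erase α i2 S v := by
  ext x
  rw [@Finset.mem_erase α i1, @Finset.mem_erase α i2]

lemma run_congr {α : Type*} {G : SimpleGraph α} {L : List α} {S S' : Finset α}
    (h : S = S') (hr : IsMDGRun G L S) : IsMDGRun G L S' := h ▸ hr

lemma Wset_erase (S : Finset (GV K n c)) (v : GV K n c) :
    Wset (S.erase v) = (Wset S).erase v := by
  unfold Wset
  rw [Finset.filter_erase]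

/-- Phase 2: run on pendant-matching states. -/
lemma run_phase2 : ∀ (T : Finset (Fin n)) (S : Finset (GV K n c)),
    (∀ u : Fin n, Sum.inr (Sum.inl u) ∈ S) →
    (∀ u : Fin n, Sum.inl u ∈ S ↔ u ∈ T) →
    (∀ (k : Fin K) (j : Fin (c k)), Sum.inr (Sum.inr ⟨k, j⟩) ∉ S) →
    ∃ Lst : List (GV K n c), Lst.length = T.card ∧ IsMDGRun (HG K n c) Lst S := by
  intro T
  induction T using Finset.strongInductionOn with
  | _ T ih =>
    intro S hP hL hW
    rcases T.eq_empty_or_nonempty with rfl | ⟨u₀, hu₀⟩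
    · refine ⟨[], by simp, ?_⟩
      intro x hx y hy hadj
      rcases x with u | u | ⟨k, j⟩
      · exact absurd ((hL u).1 hx) (by simp)
      · rcases y with v | v | ⟨k, j⟩
        · exact absurd ((hL v).1 hy) (by simp)
        · exact hadj.elim
        · exact absurd hy (hW _ _)
      · exact absurd hx (hW _ _)
    · obtain ⟨Lst, hlen, hrun⟩ := ih (T.erase u₀) (Finset.erase_ssubset hu₀)
        (S.erase (Sum.inl u₀))
        (fun u => Finset.mem_erase.2 ⟨by simp, hP u⟩)
        (fun u => by
          rw [Finset.mem_erase, Finset.mem_erase, hL u]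
          simp [Sum.inl.injEq])
        (fun k j => fun h => hW k j (Finset.mem_of_mem_erase h))
      have hTpos : 1 ≤ T.card := Finset.card_pos.2 ⟨u₀, hu₀⟩
      refine ⟨Sum.inl u₀ :: Lst, by
          simp only [List.length_cons, hlen, Finset.card_erase_of_mem hu₀]; omega,
        ?_, ?_, run_congr (erase_indep _ _) hrun⟩
      · exact (hL u₀).2 hu₀
      · intro x hx
        have h1 : 1 ≤ degIn (HG K n c) S (Sum.inl u₀) := deg_L_ge_one S u₀ (hP u₀)
        rcases x with u | u | ⟨k, j⟩
        · exact le_trans (deg_L_le_one_noW S u hW) h1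
        · exact le_trans (deg_pend_le S u) h1
        · exact absurd hx (hW _ _)

lemma bsz_ge (k : Fin K) : 3 ≤ bsz K (k : ℕ) := by
  have := k.2; unfold bsz; omega

/-- Main run existence: any state containing all of L and P has a run of
length `|Wset S| + n`. -/
lemma run_exists_gadget (hcb : ∀ k : Fin K, (c k) * bsz K (k : ℕ) ≤ n) :
    ∀ (S : Finset (GV K n c)),
    (∀ u : Fin n, Sum.inl u ∈ S) → (∀ u : Fin n, Sum.inr (Sum.inl u) ∈ S) →
    ∃ Lst : List (GV K n c), Lst.length = (Wset S).card + n ∧ IsMDGRun (HG K n c) Lst S := by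
  intro S
  induction S using Finset.strongInductionOn with
  | _ S ih =>
    intro hL hP
    rcases (Wset S).eq_empty_or_nonempty with hWe | hWne
    · have hW : ∀ (k : Fin K) (j : Fin (c k)), Sum.inr (Sum.inr ⟨k, j⟩) ∉ S := by
        intro k j h
        exact Finset.eq_empty_iff_forall_notMem.1 hWe _ (mem_Wset.2 ⟨h, k, j, rfl⟩)
      obtain ⟨Lst, hlen, hrun⟩ := run_phase2 Finset.univ S hP (fun u => by simp [hL u]) hW
      exact ⟨Lst, by simp [hlen, hWe], hrun⟩
    · -- pick a w-vertex of minimal level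
      obtain ⟨x₀, hx₀, hmin⟩ := (Wset S).exists_min_image
        (fun x => match x with | .inr (.inr ⟨k, _⟩) => (k : ℕ) | _ => 0) hWne
      obtain ⟨hx₀S, k₀, j₀, rfl⟩ := mem_Wset.1 hx₀
      have hminlvl : ∀ (k : Fin K) (j : Fin (c k)), Sum.inr (Sum.inr ⟨k, j⟩) ∈ S →
          (k₀ : ℕ) ≤ (k : ℕ) := by
        intro k j h
        simpa using hmin _ (mem_Wset.2 ⟨h, k, j, rfl⟩)
      have hdeg : degIn (HG K n c) S (Sum.inr (Sum.inr ⟨k₀, j₀⟩)) = bsz K (k₀ : ℕ) :=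
        deg_w_eq S k₀ j₀ (hcb k₀) hL
      obtain ⟨Lst, hlen, hrun⟩ := ih (S.erase (Sum.inr (Sum.inr ⟨k₀, j₀⟩)))
        (Finset.erase_ssubset hx₀S)
        (fun u => Finset.mem_erase.2 ⟨by simp, hL u⟩)
        (fun u => Finset.mem_erase.2 ⟨by simp, hP u⟩)
      refine ⟨Sum.inr (Sum.inr ⟨k₀, j₀⟩) :: Lst, ?_, hx₀S, ?_,
        run_congr (erase_indep _ _) hrun⟩
      · have hWcard : (Wset (S.erase (Sum.inr (Sum.inr ⟨k₀, j₀⟩)))).card = (Wset S).card - 1 := by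
          rw [Wset_erase, Finset.card_erase_of_mem hx₀]
        have : 1 ≤ (Wset S).card := Finset.card_pos.2 hWne
        simp only [List.length_cons, hlen, hWcard]
        omega
      · intro x hx
        rw [hdeg]
        rcases x with u | u | ⟨k, j⟩
        · have := deg_L_le S u (k₀ : ℕ) (le_of_lt (lt_of_lt_of_le k₀.2 (by omega))) hminlvl
          have h2 : K + 1 - (k₀ : ℕ) ≤ bsz K (k₀ : ℕ) := by unfold bsz; omega
          omega
        · exact le_trans (deg_pend_le S u) (by have := bsz_ge k₀; omega)
        · refine le_trans (deg_w_le S k j) ?_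
          have := hminlvl k j hx
          unfold bsz
          have := k.2
          omega

/-- Lower bound phase 2: any run on a state containing L and P has length ≥ n. -/
lemma run_lower_pendants {Lst : List (GV K n c)} {S : Finset (GV K n c)}
    (hL : ∀ u : Fin n, Sum.inl u ∈ S) (hP : ∀ u : Fin n, Sum.inr (Sum.inl u) ∈ S)
    (hrun : IsMDGRun (HG K n c) Lst S) : n ≤ Lst.length := by
  haveI : DecidableEq (GV K n c) := Classical.decEq _
  have hcov : ∀ u : Fin n, Sum.inl u ∈ Lst ∨ Sum.inr (Sum.inl u) ∈ Lst := by
    intro u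
    by_contra h
    push_neg at h
    exact run_cover hrun _ (hL u) h.1 _ (hP u) h.2 rfl
  set f : Fin n → GV K n c := fun u =>
    if (Sum.inl u : GV K n c) ∈ Lst.toFinset then Sum.inl u else Sum.inr (Sum.inl u) with hf
  have hinj := Finset.card_le_card_of_injOn (f := f)
    (s := Finset.univ) (t := Lst.toFinset) ?_ ?_
  · calc n = (Finset.univ : Finset (Fin n)).card := by simp
      _ ≤ Lst.toFinset.card := hinj
      _ ≤ Lst.length := Lst.toFinset_card_le
  · intro u _
    by_cases h : (Sum.inl u : GV K n c) ∈ Lst.toFinset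
    · simp [hf, List.mem_toFinset.1 h]
    · rcases hcov u with h' | h'
      · exact absurd (List.mem_toFinset.2 h') h
      · simp [hf, List.mem_toFinset.not.1 h, h']
  · intro u _ v _ hfe
    by_cases h1 : (Sum.inl u : GV K n c) ∈ Lst.toFinset <;>
        by_cases h2 : (Sum.inl v : GV K n c) ∈ Lst.toFinset <;>
        simp only [hf, h1, h2, if_true, if_false, ite_true, ite_false] at hfe <;>
      simp_all

/-- Lower bound: any run on a state containing all of L and P has length ≥ |Wset S| + n. -/
lemma run_lower_gadget (hcb : ∀ k : Fin K, (c k) * bsz K (k : ℕ) ≤ n) :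
    ∀ (Lst : List (GV K n c)) (S : Finset (GV K n c)),
    (∀ u : Fin n, Sum.inl u ∈ S) → (∀ u : Fin n, Sum.inr (Sum.inl u) ∈ S) →
    IsMDGRun (HG K n c) Lst S → (Wset S).card + n ≤ Lst.length := by
  intro Lst
  induction Lst with
  | nil =>
    intro S hL hP hrun
    rcases (Wset S).eq_empty_or_nonempty with hWe | ⟨x₀, hx₀⟩
    · simp only [hWe, Finset.card_empty, zero_add, List.length_nil]
      rcases Nat.eq_zero_or_pos n with h | h
      · omega
      · exact absurd (hrun _ (hL ⟨0, h⟩) _ (hP ⟨0, h⟩) rfl) (by simp)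
    · obtain ⟨hx₀S, k₀, j₀, rfl⟩ := mem_Wset.1 hx₀
      -- w has a neighbor in L
      have hbpos : 0 < bsz K (k₀ : ℕ) := by have := bsz_ge k₀; omega
      have hub : (j₀ : ℕ) * bsz K (k₀ : ℕ) + bsz K (k₀ : ℕ) ≤ n := by
        calc (j₀ : ℕ) * bsz K (k₀ : ℕ) + bsz K (k₀ : ℕ)
            = ((j₀ : ℕ) + 1) * bsz K (k₀ : ℕ) := by ring
          _ ≤ c k₀ * bsz K (k₀ : ℕ) := Nat.mul_le_mul_right _ j₀.2
          _ ≤ n := hcb k₀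
      have hu : (j₀ : ℕ) * bsz K (k₀ : ℕ) < n := by omega
      have hadj : (HG K n c).Adj (Sum.inr (Sum.inr ⟨k₀, j₀⟩)) (Sum.inl ⟨_, hu⟩) := by
        have : (j₀ : ℕ) * bsz K (k₀ : ℕ) ≤ (j₀ : ℕ) * bsz K (k₀ : ℕ) ∧
            (j₀ : ℕ) * bsz K (k₀ : ℕ) < (j₀ : ℕ) * bsz K (k₀ : ℕ) + bsz K (k₀ : ℕ) := by omega
        exact this
      exact absurd (hrun _ hx₀S _ (hL ⟨_, hu⟩) hadj) (by simp)
  | cons v Lst ih =>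
    intro S hL hP hrun
    obtain ⟨hvS, hmax, htail⟩ := hrun
    rcases (Wset S).eq_empty_or_nonempty with hWe | ⟨x₀, hx₀⟩
    · rw [hWe]
      simpa using run_lower_pendants hL hP (show IsMDGRun (HG K n c) (v :: Lst) S
        from ⟨hvS, hmax, htail⟩)
    · obtain ⟨hx₀S, k₀, j₀, rfl⟩ := mem_Wset.1 hx₀
      have hminex := (Wset S).exists_min_image
        (fun x => match x with | .inr (.inr ⟨k, _⟩) => (k : ℕ) | _ => 0) ⟨_, hx₀⟩
      obtain ⟨x₁, hx₁, hmin⟩ := hminex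
      obtain ⟨hx₁S, k₁, j₁, rfl⟩ := mem_Wset.1 hx₁
      have hminlvl : ∀ (k : Fin K) (j : Fin (c k)), Sum.inr (Sum.inr ⟨k, j⟩) ∈ S →
          (k₁ : ℕ) ≤ (k : ℕ) := by
        intro k j h
        simpa using hmin _ (mem_Wset.2 ⟨h, k, j, rfl⟩)
      have hdeg : degIn (HG K n c) S (Sum.inr (Sum.inr ⟨k₁, j₁⟩)) = bsz K (k₁ : ℕ) :=
        deg_w_eq S k₁ j₁ (hcb k₁) hL
      have hvdeg : bsz K (k₁ : ℕ) ≤ degIn (HG K n c) S v := hdeg ▸ hmax _ hx₁S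
      -- v must be a w-vertex
      have hvW : ∃ (k : Fin K) (j : Fin (c k)), v = Sum.inr (Sum.inr ⟨k, j⟩) := by
        rcases v with u | u | ⟨k, j⟩
        · exfalso
          have := deg_L_le S u (k₁ : ℕ) (le_of_lt (lt_of_lt_of_le k₁.2 (by omega))) hminlvl
          have h2 : (k₁ : ℕ) < K := k₁.2
          unfold bsz at hvdeg
          omega
        · exfalso
          have := deg_pend_le S u
          have := bsz_ge k₁
          omega
        · exact ⟨k, j, rfl⟩
      obtain ⟨k, j, rfl⟩ := hvW
      have := ih (S.erase (Sum.inr (Sum.inr ⟨k, j⟩)))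
        (fun u => Finset.mem_erase.2 ⟨by simp, hL u⟩)
        (fun u => Finset.mem_erase.2 ⟨by simp, hP u⟩)
        (run_congr (erase_indep _ _) htail)
      rw [Wset_erase, Finset.card_erase_of_mem (mem_Wset.2 ⟨hvS, k, j, rfl⟩)] at this
      have hpos : 1 ≤ (Wset S).card := Finset.card_pos.2 ⟨_, hx₀⟩
      simp only [List.length_cons]
      omega

end Gadget2

end Stmt17Aux

namespace Stmt17Aux

section Gadget3

variable {K n : ℕ} {c : Fin K → ℕ}

lemma mvc_HG (hcb : ∀ k : Fin K, (c k) * bsz K (k : ℕ) ≤ n) :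
    mvc (HG K n c) = n := by
  haveI : DecidableEq (GV K n c) := Classical.decEq _
  refine le_antisymm ?_ ?_
  · refine Nat.sInf_le ⟨(Finset.univ : Finset (Fin n)).image Sum.inl, ?_, ?_⟩
    · rintro (u | u | ⟨k, j⟩) (v | v | ⟨k', j'⟩) hadj
      · exact absurd hadj (by simp [HG, gadj])
      · exact Or.inl (by simp)
      · exact Or.inl (by simp)
      · exact Or.inr (by simp)
      · exact absurd hadj (by simp [HG, gadj])
      · exact absurd hadj (by simp [HG, gadj])
      · exact Or.inr (by simp)
      · exact absurd hadj (by simp [HG, gadj])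
      · exact absurd hadj (by simp [HG, gadj])
    · rw [Finset.card_image_of_injective _ Sum.inl_injective, Finset.card_univ,
        Fintype.card_fin]
  · refine le_csInf ⟨(Finset.univ : Finset (GV K n c)).card, Finset.univ,
      fun u w _ => Or.inl (Finset.mem_univ _), rfl⟩ ?_
    rintro m ⟨C, hC, rfl⟩
    have hcov : ∀ u : Fin n, (Sum.inl u : GV K n c) ∈ C ∨ Sum.inr (Sum.inl u) ∈ C := by
      intro u
      exact hC (show gadj K n c (Sum.inl u) (Sum.inr (Sum.inl u)) from rfl)
    set f : Fin n → GV K n c := fun u =>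
      if (Sum.inl u : GV K n c) ∈ C then Sum.inl u else Sum.inr (Sum.inl u) with hf
    have hinj := Finset.card_le_card_of_injOn (f := f)
      (s := Finset.univ) (t := C) ?_ ?_
    · simpa using hinj
    · intro u _
      by_cases h : (Sum.inl u : GV K n c) ∈ C
      · simp [hf, h]
      · rcases hcov u with h' | h'
        · exact absurd h' h
        · simp [hf, h, h']
    · intro u _ v _ hfe
      by_cases h1 : (Sum.inl u : GV K n c) ∈ C <;>
          by_cases h2 : (Sum.inl v : GV K n c) ∈ C <;>
          simp only [hf, h1, h2, if_true, if_false, ite_true, ite_false] at hfe <;>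
        simp_all

lemma Wset_univ_card :
    (Wset (Finset.univ : Finset (GV K n c))).card = ∑ k, c k := by
  haveI : DecidableEq (GV K n c) := Classical.decEq _
  have : Wset (Finset.univ : Finset (GV K n c)) =
      (Finset.univ : Finset (Σ k : Fin K, Fin (c k))).image
        (fun σ => (Sum.inr (Sum.inr σ) : GV K n c)) := by
    ext x
    rw [mem_Wset]
    constructor
    · rintro ⟨-, k, j, rfl⟩
      exact Finset.mem_image.2 ⟨⟨k, j⟩, Finset.mem_univ _, rfl⟩
    · rintro hx
      obtain ⟨⟨k, j⟩, -, rfl⟩ := Finset.mem_image.1 hx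
      exact ⟨Finset.mem_univ _, k, j, rfl⟩
  rw [this, Finset.card_image_of_injective _
    (fun a b h => by simpa using h), Finset.card_univ]
  simp

lemma minMdg_HG (hcb : ∀ k : Fin K, (c k) * bsz K (k : ℕ) ≤ n) :
    minMdg (HG K n c) = (∑ k, c k) + n := by
  obtain ⟨Lst, hlen, hrun⟩ := run_exists_gadget hcb Finset.univ
    (fun u => Finset.mem_univ _) (fun u => Finset.mem_univ _)
  rw [Wset_univ_card] at hlen
  refine le_antisymm (Nat.sInf_le ⟨Lst, hlen, hrun⟩) (le_csInf ⟨Lst.length, Lst, rfl, hrun⟩ ?_)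
  rintro m ⟨L', rfl, hrun'⟩
  have := run_lower_gadget hcb L' Finset.univ
    (fun u => Finset.mem_univ _) (fun u => Finset.mem_univ _) hrun'
  rwa [Wset_univ_card] at this

end Gadget3

end Stmt17Aux

namespace Stmt17Aux

/-- Divergence of the harmonic-type sum, in ℕ with divisibility. -/
lemma harm (r : ℕ) : ∃ K : ℕ, ∀ D : ℕ, (∀ j, 1 ≤ j → j ≤ K + 2 → j ∣ D) →
    r * D ≤ 2 * ∑ j ∈ Finset.Ico 3 (K + 3), D / j := by
  induction r with
  | zero => exact ⟨0, fun D _ => by simp⟩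
  | succ r ih =>
    obtain ⟨K, hK⟩ := ih
    refine ⟨2 * K + 2, fun D hdvd => ?_⟩
    have hsplit : ∑ j ∈ Finset.Ico 3 (K + 3), D / j + ∑ j ∈ Finset.Ico (K + 3) (2 * K + 5), D / j
        = ∑ j ∈ Finset.Ico 3 (2 * K + 5), D / j :=
      Finset.sum_Ico_consecutive _ (by omega) (by omega)
    have hd : (2 * K + 4) ∣ D := hdvd _ (by omega) (by omega)
    obtain ⟨d, rfl⟩ := hd
    have h2 : ∀ j ∈ Finset.Ico (K + 3) (2 * K + 5), d ≤ (2 * K + 4) * d / j := by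
      intro j hj
      rcases Finset.mem_Ico.1 hj with ⟨h1, h2⟩
      calc d = (2 * K + 4) * d / (2 * K + 4) := by
            rw [Nat.mul_div_cancel_left _ (by omega)]
        _ ≤ (2 * K + 4) * d / j := Nat.div_le_div_left (by omega) (by omega)
    have hsum2 : (K + 2) * d ≤ ∑ j ∈ Finset.Ico (K + 3) (2 * K + 5), (2 * K + 4) * d / j := by
      have := Finset.card_nsmul_le_sum _ _ _ h2
      rwa [Nat.card_Ico, smul_eq_mul, show 2 * K + 5 - (K + 3) = K + 2 by omega] at this
    have hIH := hK ((2 * K + 4) * d) (fun j h1 h2 => hdvd j h1 (by omega))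
    have : (r + 1) * ((2 * K + 4) * d) ≤
        2 * ∑ j ∈ Finset.Ico 3 (K + 3), (2 * K + 4) * d / j
        + 2 * ∑ j ∈ Finset.Ico (K + 3) (2 * K + 5), (2 * K + 4) * d / j := by
      have hD2 : (2 * K + 4) * d = 2 * ((K + 2) * d) := by ring
      nlinarith [hIH, hsum2]
    calc (r + 1) * ((2 * K + 4) * d) ≤ _ := this
      _ = 2 * ∑ j ∈ Finset.Ico 3 (2 * K + 2 + 3), (2 * K + 4) * d / j := by
        rw [← hsplit]; ring_nf
  
/-- Filling lemma. -/
lemma fill : ∀ (K : ℕ) (f : Fin K → ℕ) (g : ℕ), g ≤ ∑ k, f k →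
    ∃ c : Fin K → ℕ, (∀ k, c k ≤ f k) ∧ ∑ k, c k = g := by
  intro K
  induction K with
  | zero =>
    intro f g hg
    refine ⟨fun _ => 0, fun k => Nat.zero_le _, ?_⟩
    simp at hg ⊢
    omega
  | succ K ih =>
    intro f g hg
    rw [Fin.sum_univ_succ] at hg
    by_cases hgf : g ≤ f 0
    · refine ⟨Fin.cons g (fun _ => 0), ?_, ?_⟩
      · intro k
        induction k using Fin.cases with
        | zero => simpa using hgf
        | succ i => simp
      · rw [Fin.sum_univ_succ]
        simp
    · obtain ⟨c', hc'le, hc'sum⟩ := ih (fun k => f k.succ) (g - f 0) (by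
        show g - f 0 ≤ ∑ i : Fin K, f i.succ
        omega)
      refine ⟨Fin.cons (f 0) c', ?_, ?_⟩
      · intro k
        induction k using Fin.cases with
        | zero => simp
        | succ i => simpa using hc'le i
      · rw [Fin.sum_univ_succ]
        simp only [Fin.cons_zero, Fin.cons_succ]
        rw [hc'sum]
        omega

end Stmt17Aux


namespace Stmt17Aux

lemma main_aux (l m : ℕ) (hm : 1 ≤ m) (hml : m < l) (c₁ c₂ : ℕ) (h : c₁ ≤ c₂) :
    ∃ (K n : ℕ) (c : Fin K → ℕ) (p q : ℕ), 0 < p ∧ 0 < q ∧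
      (∀ k : Fin K, (c k) * bsz K (k : ℕ) ≤ n) ∧
      n = p * c₁ + q ∧
      m * ((∑ k, c k) + n) = l * (p * c₂ + q) := by
  obtain ⟨K, hK⟩ := harm (2 * l)
  set D := (K + 2).factorial with hD
  have hDpos : 0 < D := Nat.factorial_pos _
  have hdvd : ∀ j, 1 ≤ j → j ≤ K + 2 → j ∣ D := fun j h1 h2 => Nat.dvd_factorial h1 h2
  set δ := c₂ - c₁ with hδ
  set Y := (l + 1) * δ + c₂ + 1 with hY
  have hYc : c₂ + 1 ≤ Y := by omega
  have hmYY : Y ≤ m * Y := Nat.le_mul_of_pos_left Y hm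
  set E := m * Y - c₂ with hEdef
  have hE : m * Y = c₂ + E := by omega
  have hE1 : 1 ≤ E := by omega
  set t := c₁ + E with ht
  set n := D * t with hn
  set g := D * ((l - m) * Y + δ) with hg2
  have a1 : (l - m) * Y = l * Y - m * Y := by
    rw [Nat.sub_mul]
  have a2 : m * Y ≤ l * Y := Nat.mul_le_mul_right Y (le_of_lt hml)
  have a3 : l * (m * Y) = l * c₂ + l * E := by rw [hE, Nat.mul_add]
  have a4 : l * Y + Y ≤ l * (m * Y) + m * Y := by
    have h4 : (l + 1) * Y ≤ (l + 1) * (m * Y) := Nat.mul_le_mul_left _ hmYY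
    have e1 : (l + 1) * Y = l * Y + Y := by ring
    have e2 : (l + 1) * (m * Y) = l * (m * Y) + m * Y := by ring
    omega
  have a5 : (l + 1) * δ = l * δ + δ := by ring
  have a6 : l * c₁ + l * δ = l * c₂ := by
    rw [← Nat.mul_add]
    congr 1
    omega
  have hlt : l * t = l * c₁ + l * E := by rw [ht, Nat.mul_add]
  have F4 : (l - m) * Y + δ ≤ l * t := by
    rw [a1, hlt]
    omega
  have hSD : l * D ≤ ∑ j ∈ Finset.Ico 3 (K + 3), D / j := by
    have h1 := hK D hdvd
    have h2 : 2 * l * D = 2 * (l * D) := by ring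
    omega
  have hsum1 : ∑ k : Fin K, n / bsz K (k : ℕ) = ∑ j ∈ Finset.Ico 3 (K + 3), n / j := by
    rw [Finset.sum_Ico_eq_sum_range (f := fun j => n / j) (m := 3) (n := K + 3)]
    have h3 : K + 3 - 3 = K := by omega
    rw [h3]
    rw [Fin.sum_univ_eq_sum_range (fun k => n / bsz K k) K]
    rw [← Finset.sum_range_reflect (fun i => n / (3 + i)) K]
    apply Finset.sum_congr rfl
    intro i hi
    rw [Finset.mem_range] at hi
    unfold bsz
    congr 1
    omega
  have hsum2 : ∑ j ∈ Finset.Ico 3 (K + 3), n / j = t * ∑ j ∈ Finset.Ico 3 (K + 3), D / j := by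
    rw [Finset.mul_sum]
    apply Finset.sum_congr rfl
    intro j hj
    rw [Finset.mem_Ico] at hj
    rw [hn, Nat.mul_comm D t, Nat.mul_div_assoc t (hdvd j (by omega) (by omega))]
  have F5 : l * n ≤ ∑ k : Fin K, n / bsz K (k : ℕ) := by
    rw [hsum1, hsum2]
    calc l * n = t * (l * D) := by rw [hn]; ring
      _ ≤ t * ∑ j ∈ Finset.Ico 3 (K + 3), D / j := Nat.mul_le_mul_left t hSD
  have Ffeas : g ≤ ∑ k : Fin K, n / bsz K (k : ℕ) := by
    refine le_trans ?_ F5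
    calc g ≤ D * (l * t) := Nat.mul_le_mul_left D F4
      _ = l * n := by rw [hn]; ring
  obtain ⟨c, hcle, hcsum⟩ := fill K (fun k => n / bsz K (k : ℕ)) g Ffeas
  refine ⟨K, n, c, D, D * E, hDpos, Nat.mul_pos hDpos hE1, ?_, ?_, ?_⟩
  · intro k
    exact le_trans (Nat.mul_le_mul_right _ (hcle k)) (Nat.div_mul_le_self n _)
  · rw [hn, ht, Nat.mul_add]
  · rw [hcsum]
    have F3 : g + n = D * (l * Y) := by
      rw [hg2, hn, ← Nat.mul_add]
      congr 1
      rw [a1, ht]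
      omega
    rw [F3]
    have F2 : D * c₂ + D * E = D * (m * Y) := by rw [← Nat.mul_add, ← hE]
    rw [F2]
    ring

end Stmt17Aux


/-- for integers `1 ≤ m < ℓ` with `gcd(ℓ − m, m) = 1` and graphs
`G₁, G₂` with `mvc(G₁) ≤ mvc(G₂)`, there are a graph `Ĝ` and positive integers `p, q`
with `m·min-mdg(Ĝ) = ℓ·(p·mvc(G₂) + q)` and `mvc(Ĝ) = p·mvc(G₁) + q`. -/
theorem stmt17 (l m : ℕ) (hm : 1 ≤ m) (hml : m < l) (hg : Nat.gcd (l - m) m = 1)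
    {V₁ V₂ : Type*} [Fintype V₁] [Fintype V₂]
    (G₁ : SimpleGraph V₁) (G₂ : SimpleGraph V₂)
    (h : mvc G₁ ≤ mvc G₂) :
    ∃ (n : ℕ) (Ghat : SimpleGraph (Fin n)) (p q : ℕ), 0 < p ∧ 0 < q ∧
      m * minMdg Ghat = l * (p * mvc G₂ + q) ∧ mvc Ghat = p * mvc G₁ + q := by
  obtain ⟨K, n, c, p, q, hp, hq, hcb, hneq, hmeq⟩ :=
    Stmt17Aux.main_aux l m hm hml (mvc G₁) (mvc G₂) h
  let e := Fintype.equivFin (Stmt17Aux.GV K n c)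
  refine ⟨Fintype.card (Stmt17Aux.GV K n c),
    Stmt17Aux.transport e (Stmt17Aux.HG K n c), p, q, hp, hq, ?_, ?_⟩
  · rw [Stmt17Aux.minMdg_transport, Stmt17Aux.minMdg_HG hcb]
    exact hmeq
  · rw [Stmt17Aux.mvc_transport, Stmt17Aux.mvc_HG hcb]
    exact hneq


end
end
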